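/- arXiv:1807.11412 — 9 statements merged into one kernel-verified Lean document; each statement's English description precedes it below -/
import Mathlib

section
/- Let p be a prime, n ≥ 2 and s ≥ 0 be integers, and let a be an almost p-ary sequence of period n+s with exactly s zero-symbols. If the set R_a ⊆ ZMod (n+s) × ZMod p is an (n+s, p, n, λ1, λ2, μ)-DPDS, then (n+s-1)·(λ1 + μ·(p-1)) = n² - n. -/
/-!
Membership in `R` is `a i = ζ ^ b`, so `R` is the graph of a partial function `i ↦ b` and no
difference of two distinct elements has first coordinate `0`. Sorting the `n² - n` ordered pairs
of distinct elements by their difference, each of the `n + s - 1` rows `h ≠ 0` contributes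
`λ1 + (p - 1) μ`.
-/

open Finset

/-- The number of ordered pairs `(r1, r2) ∈ R × R` with `r1 ≠ r2` and `r1 - r2 = d`. -/
def diffCount {N m : ℕ} (R : Finset (ZMod N × ZMod m)) (d : ZMod N × ZMod m) : ℕ :=
  ((R ×ˢ R).filter (fun x => x.1 ≠ x.2 ∧ x.1 - x.2 = d)).card

/-- `R` is an `(N, m, k, λ1, λ2, μ)` direct product difference set in
`ZMod N × ZMod m` relative to `ZMod N × {0}` and `{0} × ZMod m`. -/
def IsDPDS (N m k : ℕ) (l1 l2 mu : ℤ) (R : Finset (ZMod N × ZMod m)) : Prop :=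
  R.card = k ∧
  (∀ h : ZMod N, h ≠ 0 → (diffCount R (h, 0) : ℤ) = l1) ∧
  (∀ g : ZMod m, g ≠ 0 → (diffCount R (0, g) : ℤ) = l2) ∧
  (∀ (h : ZMod N) (g : ZMod m), h ≠ 0 → g ≠ 0 → (diffCount R (h, g) : ℤ) = mu)

lemma diffCount_eq_card_filter_offDiag {N m : ℕ} (R : Finset (ZMod N × ZMod m))
    (d : ZMod N × ZMod m) :
    diffCount R d = #(R.offDiag.filter fun x => x.1 - x.2 = d) := by
  rw [diffCount]
  congr 1
  ext x
  simp only [mem_filter, mem_product, mem_offDiag, and_assoc]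

lemma sum_diffCount {N m : ℕ} [NeZero N] [NeZero m] (R : Finset (ZMod N × ZMod m)) :
    ∑ d, diffCount R d = #R * #R - #R := by
  rw [← offDiag_card, card_eq_sum_card_fiberwise (f := fun x => x.1 - x.2)
    fun _ _ => mem_univ _]
  simp only [diffCount_eq_card_filter_offDiag]

lemma diffCount_zero_fst_of_injOn {N m : ℕ} {R : Finset (ZMod N × ZMod m)}
    (hR : Set.InjOn Prod.fst (R : Set (ZMod N × ZMod m))) (g : ZMod m) :
    diffCount R (0, g) = 0 := by
  rw [diffCount, card_eq_zero, filter_eq_empty_iff]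
  rintro ⟨x, y⟩ hxy ⟨hne, hdiff⟩
  rw [mem_product] at hxy
  exact hne (hR hxy.1 hxy.2 (sub_eq_zero.mp (congrArg Prod.fst hdiff)))

lemma injOn_fst_of_mem_iff_eq_pow {M : Type*} [CommMonoid M] {N m : ℕ} [NeZero m]
    {ζ : M} (hζ : IsPrimitiveRoot ζ m) (f : ZMod N → M) {R : Finset (ZMod N × ZMod m)}
    (hR : ∀ x, x ∈ R ↔ f x.1 = ζ ^ x.2.val) :
    Set.InjOn Prod.fst (R : Set (ZMod N × ZMod m)) := by
  rintro ⟨h, g⟩ hx ⟨h', g'⟩ hy (rfl : h = h')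
  have hpow : ζ ^ g.val = ζ ^ g'.val := ((hR _).mp hx).symm.trans ((hR _).mp hy)
  rw [ZMod.val_injective m (hζ.pow_inj (ZMod.val_lt g) (ZMod.val_lt g') hpow)]

namespace IsDPDS

variable {N m k : ℕ} {l1 l2 mu : ℤ} {R : Finset (ZMod N × ZMod m)}

lemma sum_diffCount_row [NeZero m] (hR : IsDPDS N m k l1 l2 mu R) {h : ZMod N} (hh : h ≠ 0) :
    ∑ g, (diffCount R (h, g) : ℤ) = l1 + mu * (m - 1) := by
  obtain ⟨-, hl1, -, hmu⟩ := hR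
  rw [← add_sum_erase univ _ (mem_univ 0), hl1 h hh,
    sum_congr rfl fun g hg => hmu h g hh (ne_of_mem_erase hg), sum_const,
    card_erase_of_mem (mem_univ _), card_univ, ZMod.card, nsmul_eq_mul,
    Nat.cast_pred (NeZero.pos m), mul_comm]

theorem sub_one_mul_eq [NeZero N] [NeZero m] (hR : IsDPDS N m k l1 l2 mu R)
    (hinj : Set.InjOn Prod.fst (R : Set (ZMod N × ZMod m))) :
    ((N : ℤ) - 1) * (l1 + mu * (m - 1)) = (k : ℤ) ^ 2 - k := by
  have htotal : ∑ d, (diffCount R d : ℤ) = (k : ℤ) ^ 2 - k := by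
    rw [← hR.1, ← Nat.cast_sum, sum_diffCount, Nat.cast_sub (Nat.le_mul_self _)]
    push_cast
    ring
  rw [← htotal, Fintype.sum_prod_type, ← add_sum_erase univ _ (mem_univ 0)]
  simp only [diffCount_zero_fst_of_injOn hinj, Nat.cast_zero, sum_const_zero, zero_add]
  rw [sum_congr rfl fun h hh => hR.sum_diffCount_row (ne_of_mem_erase hh), sum_const,
    card_erase_of_mem (mem_univ _), card_univ, ZMod.card, nsmul_eq_mul,
    Nat.cast_pred (NeZero.pos N)]

end IsDPDS

theorem stmt0_general (p n s : ℕ) (hp : p.Prime) (hn : 2 ≤ n)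
    (ζ : ℂ) (hζ : IsPrimitiveRoot ζ p)
    (a : ℤ → ℂ)
    (R : Finset (ZMod (n + s) × ZMod p))
    (hR : ∀ x : ZMod (n + s) × ZMod p, x ∈ R ↔ a (x.1.val : ℤ) = ζ ^ x.2.val)
    (l1 l2 mu : ℤ)
    (hDPDS : IsDPDS (n + s) p n l1 l2 mu R) :
    ((n : ℤ) + s - 1) * (l1 + mu * ((p : ℤ) - 1)) = (n : ℤ) ^ 2 - n := by
  have : NeZero (n + s) := ⟨by omega⟩
  have : NeZero p := ⟨hp.ne_zero⟩
  have hinj := injOn_fst_of_mem_iff_eq_pow hζ (fun h => a h.val) hR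
  exact_mod_cast hDPDS.sub_one_mul_eq hinj

theorem stmt0 (p n s : ℕ) (hp : p.Prime) (hn : 2 ≤ n)
    (ζ : ℂ) (hζ : IsPrimitiveRoot ζ p)
    (a : ℤ → ℂ)
    (hper : ∀ i : ℤ, a (i + (n + s : ℕ)) = a i)
    (hzero : {i : ℕ | i < n + s ∧ a (i : ℤ) = 0}.ncard = s)
    (hval : ∀ i : ℕ, i < n + s → a (i : ℤ) ≠ 0 → ∃ b : ℕ, a (i : ℤ) = ζ ^ b)
    (R : Finset (ZMod (n + s) × ZMod p))
    (hR : ∀ x : ZMod (n + s) × ZMod p, x ∈ R ↔ a (x.1.val : ℤ) = ζ ^ x.2.val)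
    (l1 l2 mu : ℤ)
    (hDPDS : IsDPDS (n + s) p n l1 l2 mu R) :
    ((n : ℤ) + s - 1) * (l1 + mu * ((p : ℤ) - 1)) = (n : ℤ) ^ 2 - n :=
  stmt0_general p n s hp hn ζ hζ a R hR l1 l2 mu hDPDS
end

section
/- Let p be a prime, n ≥ 2 and s ≥ 1 be integers, and let a be an almost p-ary sequence of period n+s whose s zero-symbols are consecutive, say a_0 = a_1 = ⋯ = a_{s-1} = 0 and a_i is a power of ζ_p for s ≤ i ≤ n+s-1. If the set R_a ⊆ ZMod (n+s) × ZMod p is an (n+s, p, n, λ1, λ2, μ)-DPDS, then n - i = λ1 + μ·(p-1) for every i = 1, 2, …, s, and consequently s = 1. -/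
/-! Since the zero-symbols are `a_0, …, a_{s-1}`, the set `R_a` is the graph of the exponent
function `j ↦ b_j` over the residues `s ≤ j < n + s`. For a shift `1 ≤ i ≤ s` no pair of such
residues differs by `i` across the wrap-around, so exactly `n - i` pairs in `R_a × R_a` have
first-coordinate difference `i`. Summing the DPDS parameters over the second coordinate, the
same count is `λ1 + μ (p - 1)`, independent of `i`; comparing `i = 1` with `i = s` gives
`s = 1`. -/

open Finset

theorem ZMod.val_eq_val_add_of_sub_eq_natCast {N s i : ℕ} [NeZero N] {u v : ZMod N}
    (hi : i ≤ s) (hu : s ≤ u.val) (h : u - v = i) : u.val = v.val + i := by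
  have hiN : i < N := by linarith [u.val_lt]
  have hv := v.val_lt
  rw [eq_add_of_sub_eq' h, ZMod.val_add, ZMod.val_natCast_of_lt hiN] at hu ⊢
  by_cases hlt : v.val + i < N
  · exact Nat.mod_eq_of_lt hlt
  · rw [Nat.mod_eq_sub_mod (by omega), Nat.mod_eq_of_lt (by omega)] at hu
    omega

theorem IsPrimitiveRoot.pow_eq_pow_val_natCast {M : Type*} [CommMonoid M] {ζ : M} {p : ℕ}
    [NeZero p] (hζ : IsPrimitiveRoot ζ p) (b : ℕ) : ζ ^ b = ζ ^ (b : ZMod p).val := by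
  rw [ZMod.val_natCast, hζ.eq_orderOf, pow_mod_orderOf]

theorem sum_diffCount_eq_card_filter_fst_sub {N m : ℕ} [NeZero m]
    (R : Finset (ZMod N × ZMod m)) {h : ZMod N} (hh : h ≠ 0) :
    ∑ g : ZMod m, diffCount R (h, g) = #{x ∈ R ×ˢ R | x.1.1 - x.2.1 = h} := by
  rw [card_eq_sum_card_fiberwise (f := fun x => x.1.2 - x.2.2) (t := univ)
    (fun _ _ => mem_coe.2 (mem_univ _))]
  refine sum_congr rfl fun g _ => ?_
  rw [diffCount, filter_filter]
  congr 1
  refine filter_congr fun x _ => ?_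
  constructor
  · rintro ⟨hne, hx⟩
    exact ⟨congrArg Prod.fst hx, congrArg Prod.snd hx⟩
  · rintro ⟨h1, h2⟩
    refine ⟨fun heq => hh ?_, Prod.ext h1 h2⟩
    rw [← h1, heq, sub_self]

theorem IsDPDS.card_filter_fst_sub {N m k : ℕ} [NeZero m] {l1 l2 mu : ℤ}
    {R : Finset (ZMod N × ZMod m)} (hR : IsDPDS N m k l1 l2 mu R) {h : ZMod N} (hh : h ≠ 0) :
    (#{x ∈ R ×ˢ R | x.1.1 - x.2.1 = h} : ℤ) = l1 + mu * ((m : ℤ) - 1) := by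
  obtain ⟨-, hl1, -, hmu⟩ := hR
  rw [← sum_diffCount_eq_card_filter_fst_sub R hh, Nat.cast_sum,
    ← add_sum_erase _ _ (mem_univ 0), hl1 h hh,
    sum_congr rfl fun g hg => hmu h g hh (ne_of_mem_erase hg), sum_const,
    card_erase_of_mem (mem_univ _), card_univ, ZMod.card, nsmul_eq_mul,
    Nat.cast_sub NeZero.one_le]
  push_cast
  ring

theorem card_filter_fst_sub_of_mem_iff {N s i : ℕ} [NeZero N] {G : Type*} (c : ZMod N → G)
    {R : Finset (ZMod N × G)} (hR : ∀ x, x ∈ R ↔ s ≤ x.1.val ∧ x.2 = c x.1) (hi : i ≤ s) :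
    #{x ∈ R ×ˢ R | x.1.1 - x.2.1 = (i : ZMod N)} = N - s - i := by
  rw [show N - s - i = #(Ico s (N - i)) by rw [Nat.card_Ico]; omega]
  refine card_nbij' (fun x => x.2.1.val)
    (fun k => ((((k + i : ℕ) : ZMod N), c (k + i : ℕ)), ((k : ZMod N), c k))) ?_ ?_ ?_ ?_
  · intro x hx
    obtain ⟨hmem, hsub⟩ := mem_filter.1 hx
    obtain ⟨hx1, hx2⟩ := mem_product.1 hmem
    have hval := ZMod.val_eq_val_add_of_sub_eq_natCast hi ((hR _).1 hx1).1 hsub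
    have := x.1.1.val_lt
    simp only [coe_Ico, Set.mem_Ico]
    exact ⟨((hR _).1 hx2).1, by omega⟩
  · intro k hk
    simp only [coe_Ico, Set.mem_Ico] at hk
    have hk1 : ((k + i : ℕ) : ZMod N).val = k + i := ZMod.val_natCast_of_lt (by omega)
    have hk2 : (k : ZMod N).val = k := ZMod.val_natCast_of_lt (by omega)
    simp only [coe_filter, Set.mem_ofPred_eq, mem_product, hR, hk1, hk2, and_true]
    refine ⟨⟨by omega, hk.1⟩, ?_⟩
    push_cast
    ring
  · intro x hx
    obtain ⟨hmem, hsub⟩ := mem_filter.1 hx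
    obtain ⟨hx1, hx2⟩ := mem_product.1 hmem
    have hfst : ((x.2.1.val + i : ℕ) : ZMod N) = x.1.1 := by
      rw [Nat.cast_add, ZMod.natCast_zmod_val, ← hsub, add_sub_cancel]
    ext <;> simp only [hfst, ZMod.natCast_zmod_val, ((hR _).1 hx1).2, ((hR _).1 hx2).2]
  · intro k hk
    simp only [coe_Ico, Set.mem_Ico] at hk
    exact ZMod.val_natCast_of_lt (by omega)

theorem IsPrimitiveRoot.apply_eq_pow_val_iff {M : Type*} [CommMonoidWithZero M] [Nontrivial M]
    {ζ : M} {p N s : ℕ} [NeZero p] (hζ : IsPrimitiveRoot ζ p) {f : ZMod N → M}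
    {c : ZMod N → ZMod p} (hzero : ∀ j, j.val < s → f j = 0)
    (hc : ∀ j, s ≤ j.val → f j = ζ ^ (c j).val) (j : ZMod N) (g : ZMod p) :
    f j = ζ ^ g.val ↔ s ≤ j.val ∧ g = c j := by
  by_cases hj : s ≤ j.val
  · rw [hc j hj]
    refine ⟨fun h => ⟨hj, ZMod.val_injective p (hζ.pow_inj g.val_lt (c j).val_lt h.symm)⟩, ?_⟩
    rintro ⟨-, rfl⟩
    rfl
  · rw [hzero j (by omega)]
    simp only [hj, false_and, iff_false]
    exact (((hζ.isUnit (NeZero.ne p)).pow _).ne_zero).symm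

theorem stmt1_general (p n s : ℕ) (hp : p.Prime) (hn : 2 ≤ n) (hs : 1 ≤ s)
    (ζ : ℂ) (hζ : IsPrimitiveRoot ζ p)
    (a : ℤ → ℂ)
    (hzero : ∀ i : ℕ, i < s → a (i : ℤ) = 0)
    (hval : ∀ i : ℕ, s ≤ i → i < n + s → ∃ b : ℕ, a (i : ℤ) = ζ ^ b)
    (R : Finset (ZMod (n + s) × ZMod p))
    (hR : ∀ x : ZMod (n + s) × ZMod p, x ∈ R ↔ a (x.1.val : ℤ) = ζ ^ x.2.val)
    (l1 l2 mu : ℤ)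
    (hDPDS : IsDPDS (n + s) p n l1 l2 mu R) :
    (∀ i : ℕ, 1 ≤ i → i ≤ s → (n : ℤ) - i = l1 + mu * ((p : ℤ) - 1)) ∧ s = 1 := by
  have : NeZero (n + s) := ⟨by omega⟩
  have : NeZero p := ⟨hp.ne_zero⟩
  have hexp : ∀ j : ZMod (n + s), ∃ g : ZMod p, s ≤ j.val → a j.val = ζ ^ g.val := by
    intro j
    by_cases hj : s ≤ j.val
    · obtain ⟨b, hb⟩ := hval j.val hj j.val_lt
      exact ⟨b, fun _ => hb.trans (hζ.pow_eq_pow_val_natCast b)⟩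
    · exact ⟨0, fun h => absurd h hj⟩
  choose c hc using hexp
  have hRgraph (x : ZMod (n + s) × ZMod p) : x ∈ R ↔ s ≤ x.1.val ∧ x.2 = c x.1 :=
    (hR x).trans <| hζ.apply_eq_pow_val_iff (f := fun j => a j.val) (fun j => hzero j.val) hc _ _
  have hcount (i : ℕ) (hi1 : 1 ≤ i) (his : i ≤ s) :
      ((n - i : ℕ) : ℤ) = l1 + mu * ((p : ℤ) - 1) := by
    have hi0 : (i : ZMod (n + s)) ≠ 0 := by
      rw [Ne, ← ZMod.val_eq_zero, ZMod.val_natCast_of_lt (by omega)]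
      omega
    rw [← hDPDS.card_filter_fst_sub hi0, card_filter_fst_sub_of_mem_iff c hRgraph his,
      Nat.add_sub_cancel]
  have hs1 : s = 1 := by
    have := (hcount 1 le_rfl hs).trans (hcount s hs le_rfl).symm
    omega
  subst hs1
  refine ⟨fun i hi1 hi => ?_, rfl⟩
  obtain rfl : i = 1 := by omega
  rw [← hcount 1 le_rfl le_rfl]
  omega

theorem stmt1 (p n s : ℕ) (hp : p.Prime) (hn : 2 ≤ n) (hs : 1 ≤ s)
    (ζ : ℂ) (hζ : IsPrimitiveRoot ζ p)
    (a : ℤ → ℂ)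
    (hper : ∀ i : ℤ, a (i + (n + s : ℕ)) = a i)
    (hzero : ∀ i : ℕ, i < s → a (i : ℤ) = 0)
    (hval : ∀ i : ℕ, s ≤ i → i < n + s → ∃ b : ℕ, a (i : ℤ) = ζ ^ b)
    (R : Finset (ZMod (n + s) × ZMod p))
    (hR : ∀ x : ZMod (n + s) × ZMod p, x ∈ R ↔ a (x.1.val : ℤ) = ζ ^ x.2.val)
    (l1 l2 mu : ℤ)
    (hDPDS : IsDPDS (n + s) p n l1 l2 mu R) :
    (∀ i : ℕ, 1 ≤ i → i ≤ s → (n : ℤ) - i = l1 + mu * ((p : ℤ) - 1)) ∧ s = 1 :=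
  stmt1_general p n s hp hn hs ζ hζ a hzero hval R hR l1 l2 mu hDPDS
end

section
/- Let p be a prime, n ≥ 2 and s ≥ 0 be integers, and let a be an almost p-ary sequence of period n+s whose s zero-symbols are consecutive, say a_0 = a_1 = ⋯ = a_{s-1} = 0 and a_i is a power of ζ_p for s ≤ i ≤ n+s-1. Let ℓ be the number of distinct values in the set {C_a(1), C_a(2), …, C_a(n+s-1)} of out-of-phase autocorrelation coefficients. Then min{s, p, n} ≤ ℓ ≤ n - 1 + min{n, s}. -/
open Finset

/-- The autocorrelation function of a sequence `a` of period `N`: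
`C_a(t) = ∑_{i=0}^{N-1} a_i · conj(a_{i+t})`. -/
noncomputable def autocorr (N : ℕ) (a : ℤ → ℂ) (t : ℤ) : ℂ :=
  ∑ i ∈ Finset.range N, a (i : ℤ) * (starRingEnd ℂ) (a ((i : ℤ) + t))

/-! If `C_a(t) = C_a(t')` with `1 ≤ t, t' ≤ min s n`, both are sums of `p`-th roots of unity with
`n - t` and `n - t'` terms respectively. An integer polynomial vanishing at `ζ` is divisible by the
cyclotomic polynomial `Φ_p`, and `Φ_p(1) = p`, so evaluating at `1` shows `p ∣ t - t'`, whence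
`t = t'` when `1 ≤ t, t' ≤ p`. For the upper bound, `C_a(t) = 0` whenever `n ≤ t ≤ s`, so only
the `n - 1` shifts on each side of that window can contribute further values. -/

section RootsOfUnity

open Polynomial

variable {K : Type*} [Field K] [CharZero K] {p : ℕ} {ζ : K}

theorem IsPrimitiveRoot.prime_dvd_eval_one_of_aeval_eq_zero (hp : p.Prime)
    (hζ : IsPrimitiveRoot ζ p) {P : ℤ[X]} (hP : aeval ζ P = 0) : (p : ℤ) ∣ P.eval 1 := by
  have : Fact p.Prime := ⟨hp⟩
  obtain ⟨q, rfl⟩ : cyclotomic p ℤ ∣ P := by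
    rw [cyclotomic_eq_minpoly hζ hp.pos]
    exact minpoly.isIntegrallyClosed_dvd (hζ.isIntegral hp.pos) hP
  rw [eval_mul, eval_one_cyclotomic_prime]
  exact dvd_mul_right _ _

theorem IsPrimitiveRoot.prime_dvd_card_sub_card_of_sum_eq (hp : p.Prime)
    (hζ : IsPrimitiveRoot ζ p) {ι κ : Type*} {A : Finset ι} {B : Finset κ} {u : ι → K}
    {v : κ → K} (hu : ∀ i ∈ A, u i ^ p = 1) (hv : ∀ j ∈ B, v j ^ p = 1)
    (h : ∑ i ∈ A, u i = ∑ j ∈ B, v j) : (p : ℤ) ∣ (#A : ℤ) - #B := by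
  have : NeZero p := ⟨hp.ne_zero⟩
  have hpow {x : K} (hx : x ^ p = 1) : ∃ k : ℕ, ζ ^ k = x :=
    (hζ.eq_pow_of_pow_eq_one hx).imp fun _ h => h.2
  choose! f hf using fun i hi => hpow (hu i hi)
  choose! g hg using fun j hj => hpow (hv j hj)
  have hroot : aeval ζ (∑ i ∈ A, X ^ f i - ∑ j ∈ B, X ^ g j : ℤ[X]) = 0 := by
    simp only [map_sub, map_sum, map_pow, aeval_X]
    rw [sum_congr rfl hf, sum_congr rfl hg, h, sub_self]
  simpa [eval_finsetSum] using hζ.prime_dvd_eval_one_of_aeval_eq_zero hp hroot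

end RootsOfUnity

section ConsecutiveZeros

variable {n s : ℕ} {a : ℤ → ℂ}

theorem autocorr_eq_sum_Ico (hper : Function.Periodic a (n + s : ℕ))
    (hzero : ∀ i : ℕ, i < s → a i = 0) {t : ℕ} (ht : t ≤ s) :
    autocorr (n + s) a t = ∑ i ∈ Ico s (n + s - t), a i * starRingEnd ℂ (a (i + t)) := by
  have hwrap : ∀ i : ℕ, n + s - t ≤ i → i < n + s → a ((i : ℤ) + t) = 0 := by
    intro i hi hi'
    have hcast : (i : ℤ) + t - (n + s : ℕ) = (i + t - (n + s) : ℕ) := by push_cast; omega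
    rw [← hper.sub_eq, hcast]
    exact hzero _ (by omega)
  refine (sum_subset (fun i hi => ?_) fun i hi hi' => ?_).symm
  · simp only [mem_range, mem_Ico] at hi ⊢
    omega
  · simp only [mem_range, mem_Ico, not_and_or, not_le, not_lt] at hi hi'
    rcases hi' with hi' | hi'
    · rw [hzero i hi', zero_mul]
    · rw [hwrap i hi' hi, map_zero, mul_zero]

theorem autocorr_eq_zero (hper : Function.Periodic a (n + s : ℕ))
    (hzero : ∀ i : ℕ, i < s → a i = 0) {t : ℕ} (hnt : n ≤ t) (hts : t ≤ s) :
    autocorr (n + s) a t = 0 := by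
  rw [autocorr_eq_sum_Ico hper hzero hts, Ico_eq_empty (by omega), sum_empty]

theorem injOn_autocorr {p : ℕ} (hp : p.Prime) {ζ : ℂ} (hζ : IsPrimitiveRoot ζ p)
    (hper : Function.Periodic a (n + s : ℕ)) (hzero : ∀ i : ℕ, i < s → a i = 0)
    (hroot : ∀ i : ℕ, s ≤ i → i < n + s → a i ^ p = 1) :
    Set.InjOn (fun t : ℕ => autocorr (n + s) a t) (Icc 1 (min s (min p n))) := by
  intro t ht t' ht' heq
  simp only [coe_Icc, Set.mem_Icc, le_min_iff] at ht ht'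
  have hterm : ∀ k ≤ n, ∀ i ∈ Ico s (n + s - k), (a i * starRingEnd ℂ (a (i + k))) ^ p = 1 := by
    intro k hk i hi
    rw [mem_Ico] at hi
    have hcast : (i : ℤ) + k = (i + k : ℕ) := by push_cast; rfl
    rw [mul_pow, ← map_pow, hroot i hi.1 (by omega), hcast, hroot (i + k) (by omega) (by omega),
      map_one, one_mul]
  simp only [autocorr_eq_sum_Ico hper hzero ht.2.1, autocorr_eq_sum_Ico hper hzero ht'.2.1] at heq
  have hdvd := hζ.prime_dvd_card_sub_card_of_sum_eq hp (hterm t ht.2.2.2) (hterm t' ht'.2.2.2) heq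
  rw [Nat.card_Ico, Nat.card_Ico] at hdvd
  have hlt : |((n + s - t - s : ℕ) : ℤ) - (n + s - t' - s : ℕ)| < p := by
    rw [abs_lt]
    omega
  have := Int.eq_zero_of_abs_lt_dvd hdvd hlt
  omega

theorem card_image_autocorr_le (hn : 1 ≤ n) (hper : Function.Periodic a (n + s : ℕ))
    (hzero : ∀ i : ℕ, i < s → a i = 0) :
    #((Icc 1 (n + s - 1)).image fun t : ℕ => autocorr (n + s) a t) ≤ n - 1 + min n s := by
  set C := fun t : ℕ => autocorr (n + s) a t
  rcases le_or_gt s n with hsn | hns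
  · have := card_image_le (s := Icc 1 (n + s - 1)) (f := C)
    rw [Nat.card_Icc] at this
    omega
  have hsub : (Icc 1 (n + s - 1)).image C ⊆
      insert 0 ((Icc 1 (n - 1)).image C ∪ (Icc (s + 1) (n + s - 1)).image C) := by
    intro x hx
    obtain ⟨t, ht, rfl⟩ := mem_image.mp hx
    rw [mem_Icc] at ht
    by_cases hmid : n ≤ t ∧ t ≤ s
    · rw [show C t = 0 from autocorr_eq_zero hper hzero hmid.1 hmid.2]
      exact mem_insert_self _ _
    · refine mem_insert_of_mem (mem_union.mpr ?_)
      by_cases htn : t < n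
      · exact .inl (mem_image_of_mem _ (mem_Icc.mpr ⟨ht.1, by omega⟩))
      · exact .inr (mem_image_of_mem _ (mem_Icc.mpr ⟨by omega, ht.2⟩))
  calc #((Icc 1 (n + s - 1)).image C)
      ≤ #((Icc 1 (n - 1)).image C ∪ (Icc (s + 1) (n + s - 1)).image C) + 1 :=
        (card_le_card hsub).trans (card_insert_le _ _)
    _ ≤ #(Icc 1 (n - 1)) + #(Icc (s + 1) (n + s - 1)) + 1 := by
        gcongr
        exact (card_union_le _ _).trans (add_le_add card_image_le card_image_le)
    _ ≤ n - 1 + min n s := by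
        simp only [Nat.card_Icc]
        omega

end ConsecutiveZeros

theorem stmt4 (p n s : ℕ) (hp : p.Prime) (hn : 2 ≤ n)
    (ζ : ℂ) (hζ : IsPrimitiveRoot ζ p)
    (a : ℤ → ℂ)
    (hper : ∀ i : ℤ, a (i + (n + s : ℕ)) = a i)
    (hzero : ∀ i : ℕ, i < s → a (i : ℤ) = 0)
    (hval : ∀ i : ℕ, s ≤ i → i < n + s → ∃ b : ℕ, a (i : ℤ) = ζ ^ b)
    (ℓ : ℕ)
    (hℓ : ℓ = ((Finset.Icc 1 (n + s - 1)).image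
      (fun t : ℕ => autocorr (n + s) a (t : ℤ))).card) :
    min s (min p n) ≤ ℓ ∧ ℓ ≤ n - 1 + min n s := by
  have hroot : ∀ i : ℕ, s ≤ i → i < n + s → a i ^ p = 1 := by
    intro i hi hi'
    obtain ⟨b, hb⟩ := hval i hi hi'
    rw [hb, pow_right_comm, hζ.pow_eq_one, one_pow]
  subst hℓ
  refine ⟨?_, card_image_autocorr_le (by omega) hper hzero⟩
  calc min s (min p n) = #(Icc 1 (min s (min p n))) := by simp
    _ = #((Icc 1 (min s (min p n))).image fun t : ℕ => autocorr (n + s) a t) :=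
        (card_image_of_injOn (injOn_autocorr hp hζ hper hzero hroot)).symm
    _ ≤ _ := card_le_card (image_subset_image (Icc_subset_Icc le_rfl (by omega)))
end

section
/- Let p be a prime and n > s ≥ 2 be integers, and let a be an almost p-ary sequence of period n+s with consecutive zero-symbols a_0 = a_1 = ⋯ = a_{s-1} = 0 and a_i a power of ζ_p for s ≤ i ≤ n+s-1. If 1 ≤ i < j ≤ s and C_a(i) = C_a(j), then p divides j - i. -/
open Finset Polynomial

/-!
For a shift `t ≤ s`, every product `a_k · conj(a_{k+t})` touching the zero block vanishes, so
`C_a(t)` is a sum of `n - t` complex `p`-th roots of unity. Hence `C_a(i) = C_a(j)` gives an integer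
polynomial `P` with `P(ζ) = 0` and `P(1) = j - i`; the `p`-th cyclotomic polynomial, being the
minimal polynomial of `ζ`, divides `P`, so `p = Φ_p(1)` divides `P(1)`.
-/

namespace IsPrimitiveRoot

variable {K : Type*} [Field K] [CharZero K] {ζ : K} {p : ℕ}

theorem prime_dvd_eval_one_of_aeval_eq_zero_s6 (hp : p.Prime) (hζ : IsPrimitiveRoot ζ p)
    {P : ℤ[X]} (hP : aeval ζ P = 0) : (p : ℤ) ∣ P.eval 1 := by
  have : Fact p.Prime := ⟨hp⟩
  obtain ⟨Q, rfl⟩ : cyclotomic p ℤ ∣ P := by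
    rw [cyclotomic_eq_minpoly hζ hp.pos]
    exact minpoly.isIntegrallyClosed_dvd (hζ.isIntegral hp.pos) hP
  rw [eval_mul, eval_one_cyclotomic_prime]
  exact dvd_mul_right _ _

theorem prime_dvd_card_sub_card_of_sum_eq_s6 (hp : p.Prime) (hζ : IsPrimitiveRoot ζ p)
    {ι κ : Type*} {S : Finset ι} {T : Finset κ} {u : ι → K} {v : κ → K}
    (hu : ∀ x ∈ S, u x ^ p = 1) (hv : ∀ y ∈ T, v y ^ p = 1)
    (huv : ∑ x ∈ S, u x = ∑ y ∈ T, v y) : (p : ℤ) ∣ (#S : ℤ) - #T := by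
  have : NeZero p := ⟨hp.ne_zero⟩
  choose! e he using fun x hx => hζ.eq_pow_of_pow_eq_one (hu x hx)
  choose! f hf using fun y hy => hζ.eq_pow_of_pow_eq_one (hv y hy)
  have hP : aeval ζ (∑ x ∈ S, X ^ e x - ∑ y ∈ T, X ^ f y : ℤ[X]) = 0 := by
    simp only [map_sub, map_sum, map_pow, aeval_X, sum_congr rfl fun x hx => (he x hx).2,
      sum_congr rfl fun y hy => (hf y hy).2, huv, sub_self]
  simpa [eval_finsetSum] using prime_dvd_eval_one_of_aeval_eq_zero_s6 hp hζ hP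

end IsPrimitiveRoot

theorem autocorr_eq_sum_Ico_of_forall_lt_eq_zero {N s t : ℕ} {a : ℤ → ℂ}
    (hper : ∀ i : ℤ, a (i + N) = a i) (hzero : ∀ i : ℕ, i < s → a i = 0) (hts : t ≤ s) :
    autocorr N a t = ∑ k ∈ Ico s (N - t), a k * (starRingEnd ℂ) (a (k + t)) := by
  refine (sum_subset (fun k hk => ?_) fun k hk hk' => ?_).symm
  · simp only [mem_Ico, mem_range] at hk ⊢
    omega
  · simp only [mem_range, mem_Ico, not_and, not_lt] at hk hk'
    by_cases hks : k < s
    · rw [hzero k hks, zero_mul]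
    · -- `k + t` wraps around into the zero block
      have hwrap : (k : ℤ) + t = ((k + t - N : ℕ) : ℤ) + N := by
        push_cast [Nat.cast_sub (by omega : N ≤ k + t)]
        ring
      rw [hwrap, hper, hzero (k + t - N) (by omega), map_zero, mul_zero]

theorem stmt6_general (p n s : ℕ) (hp : p.Prime) (hns : s < n)
    (ζ : ℂ) (hζ : IsPrimitiveRoot ζ p)
    (a : ℤ → ℂ)
    (hper : ∀ i : ℤ, a (i + (n + s : ℕ)) = a i)
    (hzero : ∀ i : ℕ, i < s → a (i : ℤ) = 0)
    (hval : ∀ i : ℕ, s ≤ i → i < n + s → ∃ b : ℕ, a (i : ℤ) = ζ ^ b)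
    (i j : ℕ) (hij : i < j) (hj : j ≤ s)
    (heq : autocorr (n + s) a (i : ℤ) = autocorr (n + s) a (j : ℤ)) :
    p ∣ j - i := by
  have hroot : ∀ k : ℕ, s ≤ k → k < n + s → a k ^ p = 1 := fun k hsk hkn => by
    obtain ⟨b, hb⟩ := hval k hsk hkn
    rw [hb, ← pow_mul, mul_comm, pow_mul, hζ.pow_eq_one, one_pow]
  have hterm : ∀ t : ℕ, ∀ k ∈ Ico s (n + s - t),
      (a k * (starRingEnd ℂ) (a (k + t))) ^ p = 1 := fun t k hk => by
    rw [mem_Ico] at hk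
    rw [mul_pow, ← map_pow, hroot k hk.1 (by omega), ← Nat.cast_add, hroot (k + t) (by omega)
      (by omega), map_one, one_mul]
  rw [autocorr_eq_sum_Ico_of_forall_lt_eq_zero hper hzero (by omega),
    autocorr_eq_sum_Ico_of_forall_lt_eq_zero hper hzero hj] at heq
  have hdvd := hζ.prime_dvd_card_sub_card_of_sum_eq_s6 hp (hterm i) (hterm j) heq
  rw [Nat.card_Ico, Nat.card_Ico, show ((n + s - i - s : ℕ) : ℤ) - (n + s - j - s : ℕ)
    = (j - i : ℕ) by omega] at hdvd
  exact Int.natCast_dvd_natCast.mp hdvd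

theorem stmt6 (p n s : ℕ) (hp : p.Prime) (hs : 2 ≤ s) (hns : s < n)
    (ζ : ℂ) (hζ : IsPrimitiveRoot ζ p)
    (a : ℤ → ℂ)
    (hper : ∀ i : ℤ, a (i + (n + s : ℕ)) = a i)
    (hzero : ∀ i : ℕ, i < s → a (i : ℤ) = 0)
    (hval : ∀ i : ℕ, s ≤ i → i < n + s → ∃ b : ℕ, a (i : ℤ) = ζ ^ b)
    (i j : ℕ) (hi : 1 ≤ i) (hij : i < j) (hj : j ≤ s)
    (heq : autocorr (n + s) a (i : ℤ) = autocorr (n + s) a (j : ℤ)) :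
    p ∣ j - i :=
  stmt6_general p n s hp hns ζ hζ a hper hzero hval i j hij hj heq
end

section
/- Let p be a prime, n ≥ 2 an integer, and γ1, γ2 integers. Let a be an almost p-ary sequence of period n+2 with a_0 = a_1 = 0 and a_i = ζ_p^{b_i} with b_i ∈ {0,1,…,p-1} for 2 ≤ i ≤ n+1, and let R = {(i, b_i) ∈ ZMod (n+2) × ZMod p : 2 ≤ i ≤ n+1}. Then a is a nearly perfect sequence of type (γ1, γ2) if and only if p divides n - γ2 - 2 and n - γ1 - 1 and R is an (n+2, p, n, (n-γ2-2)/p + γ2, 0, (n-γ1-1)/p + γ1, (n-γ2-2)/p, (n-γ1-1)/p)-PDPDS in ZMod (n+2) × ZMod p. -/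
/-!
Write `a i = ψ (b i)` for the additive character `ψ g = ζ ^ g` of `ZMod p`. Expanding the
product, `C_a(t) = ∑_g D_R(t, g) ψ(-g)` for `t ≠ 0`, and `∑_g D_R(t, g)` is the number of
positions `i` with `a i` and `a (i + t)` both nonzero: `n - 1` for `t = ±1`, `n - 2` otherwise.
Since the cyclotomic polynomial `1 + X + ⋯ + X ^ (p - 1)` is irreducible over `ℚ`, the only
integer relations among `1, ζ, …, ζ ^ (p - 1)` have all coefficients equal; hence
`∑_g c_g ζ ^ g = γ` with `∑_g c_g = s` holds iff `c_0 - γ = c_g = (s - γ) / p` for all `g ≠ 0`.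
-/

open Finset

/-- `R` is an `(N, p, k, λ1, λ2, λ3, μ1, μ2)` partial direct product difference set
in `ZMod N × ZMod p` relative to `ZMod N × {0}` and `{0} × ZMod p`. -/
def IsPDPDS (N p k : ℕ) (l1 l2 l3 m1 m2 : ℤ) (R : Finset (ZMod N × ZMod p)) : Prop :=
  R.card = k ∧
  (∀ h : ZMod N, h ≠ 0 → h ≠ 1 → h ≠ -1 → (diffCount R (h, 0) : ℤ) = l1) ∧
  (∀ g : ZMod p, g ≠ 0 → (diffCount R (0, g) : ℤ) = l2) ∧
  (∀ h : ZMod N, h = 1 ∨ h = -1 → (diffCount R (h, 0) : ℤ) = l3) ∧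
  (∀ (h : ZMod N) (g : ZMod p), h ≠ 0 → h ≠ 1 → h ≠ -1 → g ≠ 0 →
    (diffCount R (h, g) : ℤ) = m1) ∧
  (∀ (h : ZMod N) (g : ZMod p), h = 1 ∨ h = -1 → g ≠ 0 →
    (diffCount R (h, g) : ℤ) = m2)

open ComplexConjugate

namespace IsPrimitiveRoot

variable {K : Type*} [Field K] [CharZero K] {p : ℕ} [hp : Fact p.Prime] {ζ : K}

lemma sum_zmod_mul_pow_val_eq_zero_iff (hζ : IsPrimitiveRoot ζ p) (α : ZMod p → ℤ) :
    ∑ g, (α g : K) * ζ ^ g.val = 0 ↔ ∀ g, α g = α 0 := by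
  obtain ⟨k, rfl⟩ := Nat.exists_eq_succ_of_ne_zero hp.out.ne_zero
  exact (hζ.sum_eq_zero_iff_forall_eq_int hp.out α).trans
    ⟨fun h g => h g 0, fun h g g' => (h g).trans (h g').symm⟩

lemma sum_zmod_mul_pow_val_eq_intCast_iff (hζ : IsPrimitiveRoot ζ p) (c : ZMod p → ℤ) (γ : ℤ) :
    ∑ g, (c g : K) * ζ ^ g.val = γ ↔
      (p : ℤ) ∣ (∑ g, c g) - γ ∧ c 0 = ((∑ g, c g) - γ) / p + γ ∧
        ∀ g ≠ 0, c g = ((∑ g, c g) - γ) / p := by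
  set α : ZMod p → ℤ := fun g => c g - if g = 0 then γ else 0
  have hαζ : ∑ g, (α g : K) * ζ ^ g.val = ∑ g, (c g : K) * ζ ^ g.val - γ := by
    simp [α, sub_mul, Finset.sum_sub_distrib]
  have hα : ∑ g, α g = ∑ g, c g - γ := by simp [α, Finset.sum_sub_distrib]
  rw [← sub_eq_zero, ← hαζ, sum_zmod_mul_pow_val_eq_zero_iff hζ]
  constructor
  · intro hconst
    have hpα : ∑ g, c g - γ = p * α 0 := by
      rw [← hα, Finset.sum_congr rfl fun g _ => hconst g]
      simp
    have hdiv : (∑ g, c g - γ) / p = α 0 := by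
      rw [hpα, Int.mul_ediv_cancel_left _ (by exact_mod_cast hp.out.ne_zero)]
    refine ⟨⟨_, hpα⟩, by simp [hdiv, α], fun g hg => ?_⟩
    rw [hdiv, ← hconst g]
    simp [α, hg]
  · rintro ⟨-, h0, hc⟩ g
    by_cases hg : g = 0
    · rw [hg]
    · simp [α, hg, hc g hg, h0]

end IsPrimitiveRoot

lemma Finset.sum_range_eq_sum_zmod {M : Type*} [AddCommMonoid M] {N : ℕ} [NeZero N]
    (F : ZMod N → M) :
    ∑ i ∈ range N, F i = ∑ x, F x :=
  sum_nbij' (fun i => (i : ZMod N)) ZMod.val (by simp) (by simp [ZMod.val_lt])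
    (fun _ hi => ZMod.val_cast_of_lt (mem_range.1 hi)) (by simp) (by simp)

section Correlation

variable {N p : ℕ} [NeZero N] [NeZero p]

noncomputable def zmodAutocorr (f : ZMod N → ℂ) (h : ZMod N) : ℂ :=
  ∑ x, f x * conj (f (x + h))

lemma autocorr_eq_zmodAutocorr {a : ℤ → ℂ} (f : ZMod N → ℂ) (ha : ∀ i : ℤ, a i = f i) (t : ℤ) :
    autocorr N a t = zmodAutocorr f t := by
  simp only [autocorr, zmodAutocorr, ha, Int.cast_add, Int.cast_natCast]
  exact sum_range_eq_sum_zmod fun x => f x * conj (f (x + t))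

lemma sum_product_sub_eq_sum_diffCount_smul {M : Type*} [AddCommMonoid M]
    (R : Finset (ZMod N × ZMod p)) (F : ZMod N × ZMod p → M) (hF : F 0 = 0) :
    ∑ q ∈ R ×ˢ R, F (q.1 - q.2) = ∑ d, diffCount R d • F d := by
  rw [← sum_filter_of_ne (p := fun q => q.1 ≠ q.2) fun q _ hq heq => hq (by simp [heq, hF]),
    ← sum_fiberwise' ((R ×ˢ R).filter fun q => q.1 ≠ q.2) (fun q => q.1 - q.2) F]
  simp [diffCount, filter_filter]

noncomputable def seqOf (ψ : AddChar (ZMod p) ℂ) (R : Finset (ZMod N × ZMod p)) (x : ZMod N) : ℂ :=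
  ∑ r ∈ R with r.1 = x, ψ r.2

lemma zmodAutocorr_seqOf (ψ : AddChar (ZMod p) ℂ) (R : Finset (ZMod N × ZMod p)) {h : ZMod N}
    (hh : h ≠ 0) :
    zmodAutocorr (seqOf ψ R) h = ∑ g, (diffCount R (h, g) : ℂ) * ψ (-g) := by
  set F : ZMod N × ZMod p → ℂ := fun d => if d.1 = h then ψ (-d.2) else 0
  calc zmodAutocorr (seqOf ψ R) h
      = ∑ r ∈ R, ∑ r' ∈ R, F (r' - r) := by
        simp only [zmodAutocorr, seqOf, map_sum, sum_mul_sum]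
        rw [← sum_fiberwise R Prod.fst]
        refine sum_congr rfl fun x _ => sum_congr rfl fun r hr => ?_
        rw [← (mem_filter.1 hr).2, sum_filter]
        refine sum_congr rfl fun r' _ => ?_
        simp only [F, Prod.fst_sub, Prod.snd_sub, sub_eq_iff_eq_add', neg_sub,
          ← AddChar.map_neg_eq_conj, ← AddChar.map_add_eq_mul, ← sub_eq_add_neg]
    _ = ∑ q ∈ R ×ˢ R, F (q.1 - q.2) := by rw [sum_comm, sum_product]
    _ = ∑ g, (diffCount R (h, g) : ℂ) * ψ (-g) := by
        rw [sum_product_sub_eq_sum_diffCount_smul R F (by simp [F, hh.symm]),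
          Fintype.sum_prod_type]
        simp [F]

lemma zmodAutocorr_seqOf_zmodChar_eq_intCast_iff [Fact p.Prime] {ζ : ℂ}
    (hζ : IsPrimitiveRoot ζ p) (R : Finset (ZMod N × ZMod p)) {h : ZMod N} (hh : h ≠ 0)
    {s : ℤ} (hs : ∑ g, (diffCount R (h, g) : ℤ) = s) (γ : ℤ) :
    zmodAutocorr (seqOf (AddChar.zmodChar p hζ.pow_eq_one) R) h = γ ↔
      (p : ℤ) ∣ s - γ ∧ (diffCount R (h, 0) : ℤ) = (s - γ) / p + γ ∧
        ∀ g ≠ 0, (diffCount R (h, g) : ℤ) = (s - γ) / p := by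
  have hsum : ∑ g, (diffCount R (h, -g) : ℤ) = s :=
    (Fintype.sum_equiv (Equiv.neg _) _ _ fun _ => rfl).trans hs
  have hneg (m : ℤ) : (∀ g ≠ 0, (diffCount R (h, -g) : ℤ) = m) ↔
      ∀ g ≠ 0, (diffCount R (h, g) : ℤ) = m :=
    ⟨fun H g hg => by simpa using H (-g) (neg_ne_zero.2 hg),
      fun H g hg => H (-g) (neg_ne_zero.2 hg)⟩
  rw [zmodAutocorr_seqOf _ R hh,
    ← Fintype.sum_equiv (Equiv.neg _) (fun g => ((diffCount R (h, -g) : ℤ) : ℂ) * ζ ^ g.val) _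
      fun g => by simp [AddChar.zmodChar_apply],
    hζ.sum_zmod_mul_pow_val_eq_intCast_iff, hsum, hneg, neg_zero]

end Correlation

namespace ZMod

variable {n : ℕ}

instance fact_one_lt_add_two : Fact (1 < n + 2) := ⟨by omega⟩

lemma mem_zero_one_iff_val_lt_two (x : ZMod (n + 2)) :
    x ∈ ({0, 1} : Finset (ZMod (n + 2))) ↔ x.val < 2 := by
  rw [mem_insert, mem_singleton, ← val_eq_zero, ← (val_injective _).eq_iff, val_one]
  omega

lemma natCast_add_one_eq_neg_one : (n : ZMod (n + 2)) + 1 = -1 := by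
  rw [eq_neg_iff_add_eq_zero]
  exact_mod_cast natCast_self (n + 2)

lemma ne_zero_one_neg_one_iff (h : ZMod (n + 2)) :
    h ≠ 0 ∧ h ≠ 1 ∧ h ≠ -1 ↔ ∃ t : ℕ, 2 ≤ t ∧ t ≤ n ∧ (t : ZMod (n + 2)) = h := by
  have hval {h : ZMod (n + 2)} : h ≠ 0 ∧ h ≠ 1 ∧ h ≠ -1 ↔ 2 ≤ h.val ∧ h.val ≤ n := by
    rw [ne_eq, ne_eq, ne_eq, ← val_eq_zero, ← (val_injective _).eq_iff,
      ← (val_injective _).eq_iff, val_one, val_neg_one]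
    have := h.val_lt
    omega
  refine ⟨fun hh => ⟨h.val, (hval.1 hh).1, (hval.1 hh).2, natCast_zmod_val h⟩, ?_⟩
  rintro ⟨t, ht2, htn, rfl⟩
  exact hval.2 (by rw [val_cast_of_lt (by omega)]; exact ⟨ht2, htn⟩)

lemma forall_two_le_le_iff {P : ZMod (n + 2) → Prop} :
    (∀ t : ℕ, 2 ≤ t → t ≤ n → P t) ↔ ∀ h : ZMod (n + 2), h ≠ 0 → h ≠ 1 → h ≠ -1 → P h := by
  refine ⟨fun H h h0 h1 hm1 => ?_, fun H t ht2 htn => ?_⟩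
  · obtain ⟨t, ht2, htn, rfl⟩ := (ne_zero_one_neg_one_iff h).1 ⟨h0, h1, hm1⟩
    exact H t ht2 htn
  · obtain ⟨h0, h1, hm1⟩ := (ne_zero_one_neg_one_iff _).2 ⟨t, ht2, htn, rfl⟩
    exact H _ h0 h1 hm1

lemma card_compl_of_eq_one_or_neg_one (hn : 1 ≤ n) {h : ZMod (n + 2)} (hh : h = 1 ∨ h = -1) :
    #({0, 1, -h, 1 - h}ᶜ : Finset (ZMod (n + 2))) = n - 1 := by
  have h2 : (2 : ZMod (n + 2)) ≠ 0 := fun e => by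
    simpa [val_ofNat_of_lt (show 2 < n + 2 by omega)] using congrArg val e
  have hm1 : (-1 : ZMod (n + 2)) ≠ 1 := fun e => h2 (by linear_combination -e)
  have h21 : (2 : ZMod (n + 2)) ≠ 1 := fun e =>
    one_ne_zero (α := ZMod (n + 2)) (by linear_combination e)
  suffices #({0, 1, -h, 1 - h} : Finset (ZMod (n + 2))) = 3 by
    rw [card_compl, card, this]; omega
  rw [card_eq_three]
  rcases hh with rfl | rfl
  · refine ⟨0, 1, -1, zero_ne_one, (neg_ne_zero.2 one_ne_zero).symm, hm1.symm, ?_⟩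
    ext
    simp only [sub_self, mem_insert, mem_singleton]
    tauto
  · refine ⟨0, 1, 2, zero_ne_one, h2.symm, h21.symm, ?_⟩
    ext
    simp only [neg_neg, sub_neg_eq_add, one_add_one_eq_two, mem_insert, mem_singleton]
    tauto

lemma card_compl_of_ne {h : ZMod (n + 2)} (h0 : h ≠ 0) (h1 : h ≠ 1) (hm1 : h ≠ -1) :
    #({0, 1, -h, 1 - h}ᶜ : Finset (ZMod (n + 2))) = n - 2 := by
  have h10 : (1 : ZMod (n + 2)) ≠ 0 := one_ne_zero
  rw [card_compl, card, card_insert_of_notMem (by simp only [mem_insert, mem_singleton]; grind),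
    card_insert_of_notMem (by simp only [mem_insert, mem_singleton]; grind),
    card_pair fun e => h10 (by linear_combination -e)]
  omega

end ZMod

section Graph

variable {n p : ℕ} (b : ℕ → ℕ)

def graphOf : Finset (ZMod (n + 2) × ZMod p) :=
  ({0, 1}ᶜ : Finset (ZMod (n + 2))).image fun x => (x, (b x.val : ZMod p))

variable {b}

lemma mem_graphOf {r : ZMod (n + 2) × ZMod p} :
    r ∈ graphOf b ↔ r.1 ∉ ({0, 1} : Finset (ZMod (n + 2))) ∧ r.2 = b r.1.val := by
  rcases r with ⟨x, y⟩
  simp [graphOf, eq_comm]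

lemma eq_graphOf_of_forall_mem_iff {R : Finset (ZMod (n + 2) × ZMod p)}
    (hR : ∀ r : ZMod (n + 2) × ZMod p,
      r ∈ R ↔ 2 ≤ r.1.val ∧ r.1.val ≤ n + 1 ∧ r.2 = (b r.1.val : ZMod p)) :
    R = graphOf b := by
  ext r
  have : r.1.val ≤ n + 1 := Nat.le_of_lt_succ r.1.val_lt
  rw [hR, mem_graphOf, ZMod.mem_zero_one_iff_val_lt_two, not_lt]
  tauto

lemma card_graphOf : #(graphOf (n := n) (p := p) b) = n := by
  rw [graphOf, card_image_of_injective _ fun x y e => congrArg Prod.fst e, card_compl,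
    ZMod.card, card_pair zero_ne_one]
  omega

lemma diffCount_graphOf_zero_fst (g : ZMod p) : diffCount (graphOf (n := n) b) (0, g) = 0 := by
  rw [diffCount, card_eq_zero, filter_eq_empty_iff]
  rintro ⟨r, r'⟩ hr ⟨hne, hd⟩
  rw [mem_product, mem_graphOf, mem_graphOf] at hr
  have h1 : r.1 = r'.1 := sub_eq_zero.1 (congrArg Prod.fst hd)
  exact hne (Prod.ext h1 (by rw [hr.1.2, hr.2.2, h1]))

lemma seqOf_graphOf (ψ : AddChar (ZMod p) ℂ) (x : ZMod (n + 2)) :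
    seqOf ψ (graphOf b) x = if x ∈ ({0, 1} : Finset (ZMod (n + 2))) then 0 else ψ (b x.val) := by
  rw [seqOf, graphOf, filter_image, sum_image fun x _ y _ e => congrArg Prod.fst e]
  simp only [filter_eq', mem_compl]
  split_ifs <;> simp

variable [NeZero p]

lemma sum_diffCount_graphOf {h : ZMod (n + 2)} (hh : h ≠ 0) :
    ∑ g, diffCount (graphOf (p := p) b) (h, g) = #({0, 1, -h, 1 - h}ᶜ : Finset (ZMod (n + 2))) := by
  -- The trivial character turns `zmodAutocorr_seqOf` into a count of the `x` with `x` and `x + h`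
  -- both off `{0, 1}`.
  have htriv := zmodAutocorr_seqOf (1 : AddChar (ZMod p) ℂ) (graphOf b) hh
  simp only [zmodAutocorr, seqOf_graphOf, AddChar.one_apply, mul_one] at htriv
  have hpt (x : ZMod (n + 2)) :
      ((if x ∈ ({0, 1} : Finset (ZMod (n + 2))) then 0 else 1) *
        conj (if x + h ∈ ({0, 1} : Finset (ZMod (n + 2))) then 0 else 1) : ℂ) =
      if x ∈ ({0, 1, -h, 1 - h}ᶜ : Finset (ZMod (n + 2))) then 1 else 0 := by
    simp only [mem_compl, mem_insert, mem_singleton, ← eq_sub_iff_add_eq, zero_sub]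
    split_ifs <;> simp_all
  rw [sum_congr rfl fun x _ => hpt x, sum_boole, filter_mem_eq_inter, univ_inter] at htriv
  exact_mod_cast htriv.symm

lemma apply_eq_seqOf_graphOf {a : ℤ → ℂ} {ζ : ℂ} (hζ : ζ ^ p = 1)
    (hper : ∀ i : ℤ, a (i + (n + 2 : ℕ)) = a i) (ha0 : a 0 = 0) (ha1 : a 1 = 0)
    (hval : ∀ i : ℕ, 2 ≤ i → i ≤ n + 1 → a i = ζ ^ b i) (i : ℤ) :
    a i = seqOf (AddChar.zmodChar p hζ) (graphOf b) (i : ZMod (n + 2)) := by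
  have hmod : a i = a (i : ZMod (n + 2)).val := by
    rw [ZMod.val_intCast, Int.emod_def, mul_comm]
    exact (Function.Periodic.sub_int_mul_eq hper _).symm
  rw [hmod, seqOf_graphOf]
  split_ifs with hx <;> rw [ZMod.mem_zero_one_iff_val_lt_two] at hx
  · interval_cases (i : ZMod (n + 2)).val <;> simpa
  · have := (i : ZMod (n + 2)).val_lt
    rw [hval _ (by omega) (by omega), AddChar.zmodChar_apply']

end Graph

section Criterion

variable {n p : ℕ} [Fact p.Prime] {b : ℕ → ℕ} {ζ : ℂ}

lemma zmodAutocorr_graphOf_eq_iff_of_eq_one_or_neg_one (hζ : IsPrimitiveRoot ζ p) (hn : 1 ≤ n)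
    {h : ZMod (n + 2)} (hh : h = 1 ∨ h = -1) (γ : ℤ) :
    zmodAutocorr (seqOf (AddChar.zmodChar p hζ.pow_eq_one) (graphOf b)) h = γ ↔
      (p : ℤ) ∣ n - γ - 1 ∧ (diffCount (graphOf b) (h, (0 : ZMod p)) : ℤ) = (n - γ - 1) / p + γ ∧
        ∀ g : ZMod p, g ≠ 0 → (diffCount (graphOf b) (h, g) : ℤ) = (n - γ - 1) / p := by
  have h0 : h ≠ 0 := by rcases hh with rfl | rfl <;> simp
  have hs := (sum_diffCount_graphOf (b := b) (p := p) h0).trans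
    (ZMod.card_compl_of_eq_one_or_neg_one hn hh)
  rw [show (n : ℤ) - γ - 1 = (n - 1 : ℤ) - γ by ring]
  exact zmodAutocorr_seqOf_zmodChar_eq_intCast_iff hζ _ h0 (by rw [← Nat.cast_sum, hs]; omega) γ

lemma zmodAutocorr_graphOf_eq_iff_of_ne (hζ : IsPrimitiveRoot ζ p) {h : ZMod (n + 2)}
    (h0 : h ≠ 0) (h1 : h ≠ 1) (hm1 : h ≠ -1) (γ : ℤ) :
    zmodAutocorr (seqOf (AddChar.zmodChar p hζ.pow_eq_one) (graphOf b)) h = γ ↔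
      (p : ℤ) ∣ n - γ - 2 ∧ (diffCount (graphOf b) (h, (0 : ZMod p)) : ℤ) = (n - γ - 2) / p + γ ∧
        ∀ g : ZMod p, g ≠ 0 → (diffCount (graphOf b) (h, g) : ℤ) = (n - γ - 2) / p := by
  have hs := (sum_diffCount_graphOf (b := b) (p := p) h0).trans (ZMod.card_compl_of_ne h0 h1 hm1)
  obtain ⟨t, ht2, htn, -⟩ := (ZMod.ne_zero_one_neg_one_iff h).1 ⟨h0, h1, hm1⟩
  rw [show (n : ℤ) - γ - 2 = (n - 2 : ℤ) - γ by ring]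
  exact zmodAutocorr_seqOf_zmodChar_eq_intCast_iff hζ _ h0 (by rw [← Nat.cast_sum, hs]; omega) γ

end Criterion

theorem stmt7_general (p n : ℕ) (hp : p.Prime) (hn : 2 ≤ n) (γ1 γ2 : ℤ)
    (ζ : ℂ) (hζ : IsPrimitiveRoot ζ p)
    (a : ℤ → ℂ)
    (hper : ∀ i : ℤ, a (i + (n + 2 : ℕ)) = a i)
    (ha0 : a 0 = 0) (ha1 : a 1 = 0)
    (b : ℕ → ℕ)
    (hval : ∀ i : ℕ, 2 ≤ i → i ≤ n + 1 → a (i : ℤ) = ζ ^ (b i))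
    (R : Finset (ZMod (n + 2) × ZMod p))
    (hR : ∀ x : ZMod (n + 2) × ZMod p,
      x ∈ R ↔ 2 ≤ x.1.val ∧ x.1.val ≤ n + 1 ∧ x.2 = (b x.1.val : ZMod p)) :
    (autocorr (n + 2) a 1 = (γ1 : ℂ) ∧ autocorr (n + 2) a ((n : ℤ) + 1) = (γ1 : ℂ) ∧
      ∀ t : ℕ, 2 ≤ t → t ≤ n → autocorr (n + 2) a (t : ℤ) = (γ2 : ℂ)) ↔
    ((p : ℤ) ∣ (n : ℤ) - γ2 - 2 ∧ (p : ℤ) ∣ (n : ℤ) - γ1 - 1 ∧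
      IsPDPDS (n + 2) p n
        (((n : ℤ) - γ2 - 2) / p + γ2) 0 (((n : ℤ) - γ1 - 1) / p + γ1)
        (((n : ℤ) - γ2 - 2) / p) (((n : ℤ) - γ1 - 1) / p) R) := by
  have : Fact p.Prime := ⟨hp⟩
  obtain rfl := eq_graphOf_of_forall_mem_iff hR
  have hauto (t : ℤ) := autocorr_eq_zmodAutocorr _
    (apply_eq_seqOf_graphOf hζ.pow_eq_one hper ha0 ha1 hval) t
  have hpm {h : ZMod (n + 2)} (hh : h = 1 ∨ h = -1) :=
    zmodAutocorr_graphOf_eq_iff_of_eq_one_or_neg_one (b := b) hζ (by omega) hh γ1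
  have hmid {h : ZMod (n + 2)} (h0 : h ≠ 0) (h1 : h ≠ 1) (hm1 : h ≠ -1) :=
    zmodAutocorr_graphOf_eq_iff_of_ne (b := b) hζ h0 h1 hm1 γ2
  obtain ⟨h20, h21, h2m1⟩ :=
    (ZMod.ne_zero_one_neg_one_iff (2 : ZMod (n + 2))).2 ⟨2, le_rfl, hn, rfl⟩
  simp only [hauto, Int.cast_one, Int.cast_add, Int.cast_natCast, ZMod.natCast_add_one_eq_neg_one,
    hpm (Or.inl rfl), hpm (Or.inr rfl)]
  rw [ZMod.forall_two_le_le_iff (P := fun h => zmodAutocorr _ h = γ2)]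
  constructor
  · rintro ⟨⟨D1, L1, M1⟩, ⟨-, Lm1, Mm1⟩, H⟩
    have H' {h : ZMod (n + 2)} (h0 : h ≠ 0) (h1 : h ≠ 1) (hm1 : h ≠ -1) :=
      (hmid h0 h1 hm1).1 (H h h0 h1 hm1)
    refine ⟨(H' h20 h21 h2m1).1, D1, card_graphOf, fun h h0 h1 hm1 => (H' h0 h1 hm1).2.1,
      fun g _ => by simp [diffCount_graphOf_zero_fst], ?_,
      fun h g h0 h1 hm1 => (H' h0 h1 hm1).2.2 g, ?_⟩
    · rintro h (rfl | rfl)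
      exacts [L1, Lm1]
    · rintro h g (rfl | rfl)
      exacts [M1 g, Mm1 g]
  · rintro ⟨D2, D1, -, L1, -, L3, M1, M2⟩
    exact ⟨⟨D1, L3 1 (Or.inl rfl), fun g => M2 1 g (Or.inl rfl)⟩,
      ⟨D1, L3 (-1) (Or.inr rfl), fun g => M2 (-1) g (Or.inr rfl)⟩,
      fun h h0 h1 hm1 => (hmid h0 h1 hm1).2 ⟨D2, L1 h h0 h1 hm1, fun g => M1 h g h0 h1 hm1⟩⟩

theorem stmt7 (p n : ℕ) (hp : p.Prime) (hn : 2 ≤ n) (γ1 γ2 : ℤ)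
    (ζ : ℂ) (hζ : IsPrimitiveRoot ζ p)
    (a : ℤ → ℂ)
    (hper : ∀ i : ℤ, a (i + (n + 2 : ℕ)) = a i)
    (ha0 : a 0 = 0) (ha1 : a 1 = 0)
    (b : ℕ → ℕ) (hb : ∀ i : ℕ, 2 ≤ i → i ≤ n + 1 → b i < p)
    (hval : ∀ i : ℕ, 2 ≤ i → i ≤ n + 1 → a (i : ℤ) = ζ ^ (b i))
    (R : Finset (ZMod (n + 2) × ZMod p))
    (hR : ∀ x : ZMod (n + 2) × ZMod p,
      x ∈ R ↔ 2 ≤ x.1.val ∧ x.1.val ≤ n + 1 ∧ x.2 = (b x.1.val : ZMod p)) :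
    (autocorr (n + 2) a 1 = (γ1 : ℂ) ∧ autocorr (n + 2) a ((n : ℤ) + 1) = (γ1 : ℂ) ∧
      ∀ t : ℕ, 2 ≤ t → t ≤ n → autocorr (n + 2) a (t : ℤ) = (γ2 : ℂ)) ↔
    ((p : ℤ) ∣ (n : ℤ) - γ2 - 2 ∧ (p : ℤ) ∣ (n : ℤ) - γ1 - 1 ∧
      IsPDPDS (n + 2) p n
        (((n : ℤ) - γ2 - 2) / p + γ2) 0 (((n : ℤ) - γ1 - 1) / p + γ1)
        (((n : ℤ) - γ2 - 2) / p) (((n : ℤ) - γ1 - 1) / p) R) :=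
  stmt7_general p n hp hn γ1 γ2 ζ hζ a hper ha0 ha1 b hval R hR
end

section
/- Let p be a prime and n ≥ 2 an integer. If R ⊆ ZMod (n+2) × ZMod p with |R| = n is an (n+2, p, n, λ1, 0, λ3, μ1, μ2)-PDPDS, then (n-1)·(λ1 + (p-1)·μ1) + 2·(λ3 + (p-1)·μ2) = n² - n. -/
open Finset

/-!
Every ordered pair of distinct elements of `R` has exactly one difference, so the
difference counts over the whole group add up to `|R|² - |R| = n² - n`. Grouping the
group elements by their first coordinate `h`, the row `h = 0` contributes nothing
(`λ2 = 0`, and `0` is never a difference of distinct elements), the rows `h = ±1` contribute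
`λ3 + (p - 1) μ2` each, and the remaining `n - 1` rows contribute `λ1 + (p - 1) μ1` each.
-/

theorem Fintype.sum_eq_sum_add_mul_of_eq_on_compl {α R : Type*} [Fintype α] [DecidableEq α]
    [Ring R] (f : α → R) (T : Finset α) (c : R) (hc : ∀ x ∉ T, f x = c) :
    ∑ x, f x = ∑ x ∈ T, f x + ((Fintype.card α : R) - #T) * c := by
  rw [← sum_add_sum_compl T, Finset.sum_congr rfl fun x hx => hc x (mem_compl.mp hx),
    Finset.sum_const, card_compl, nsmul_eq_mul, Nat.cast_sub (card_le_univ T)]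

theorem zero_notMem_one_neg_one {R : Type*} [Ring R] [Nontrivial R] [DecidableEq R] :
    (0 : R) ∉ ({1, -1} : Finset R) := by
  simp [eq_comm (a := (0 : R))]

theorem ZMod.card_zero_one_neg_one {N : ℕ} [Fact (2 < N)] :
    #({0, 1, -1} : Finset (ZMod N)) = 3 := by
  have : Fact (1 < N) := ⟨one_lt_two.trans Fact.out⟩
  rw [card_insert_of_notMem zero_notMem_one_neg_one, card_pair ZMod.neg_one_ne_one.symm]

theorem ZMod.sum_zero_one_neg_one {N : ℕ} [Fact (2 < N)] {M : Type*} [AddCommMonoid M]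
    (f : ZMod N → M) : ∑ h ∈ {0, 1, -1}, f h = f 0 + (f 1 + f (-1)) := by
  have : Fact (1 < N) := ⟨one_lt_two.trans Fact.out⟩
  rw [sum_insert zero_notMem_one_neg_one, sum_pair ZMod.neg_one_ne_one.symm]

section diffCount

variable {N m : ℕ} (R : Finset (ZMod N × ZMod m))

theorem diffCount_zero : diffCount R 0 = 0 := by
  simp only [diffCount, card_eq_zero, filter_eq_empty_iff]
  rintro x - ⟨hne, heq⟩
  exact hne (sub_eq_zero.mp heq)

variable [NeZero m]

theorem sum_diffCount_row (h : ZMod N) {a b : ℤ} (ha : (diffCount R (h, 0) : ℤ) = a)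
    (hb : ∀ g : ZMod m, g ≠ 0 → (diffCount R (h, g) : ℤ) = b) :
    ∑ g, (diffCount R (h, g) : ℤ) = a + ((m : ℤ) - 1) * b := by
  rw [Fintype.sum_eq_sum_add_mul_of_eq_on_compl _ {0} b fun g hg => hb g (by simpa using hg),
    sum_singleton, ha, ZMod.card, card_singleton, Nat.cast_one]

variable [NeZero N]

theorem sum_diffCount_eq_card_offDiag : ∑ d, diffCount R d = #R.offDiag := by
  rw [card_eq_sum_card_fiberwise (f := fun x => x.1 - x.2) (t := univ) fun _ _ => mem_univ _]
  refine sum_congr rfl fun d _ => congrArg card ?_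
  ext x
  simp only [mem_filter, mem_offDiag, mem_product]
  tauto

theorem sum_diffCount_eq_card_sq_sub_card : ∑ d, (diffCount R d : ℤ) = (#R : ℤ) ^ 2 - #R := by
  rw [← Nat.cast_sum, sum_diffCount_eq_card_offDiag, offDiag_card,
    Nat.cast_sub (Nat.le_mul_self _)]
  push_cast
  ring

end diffCount

theorem stmt9 (p n : ℕ) (hp : p.Prime) (hn : 2 ≤ n)
    (l1 l3 m1 m2 : ℤ)
    (R : Finset (ZMod (n + 2) × ZMod p))
    (hPDPDS : IsPDPDS (n + 2) p n l1 0 l3 m1 m2 R) :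
    ((n : ℤ) - 1) * (l1 + ((p : ℤ) - 1) * m1) + 2 * (l3 + ((p : ℤ) - 1) * m2) =
      (n : ℤ) ^ 2 - n := by
  obtain ⟨hcard, hl1, hl2, hl3, hm1, hm2⟩ := hPDPDS
  have : NeZero p := ⟨hp.ne_zero⟩
  have : Fact (2 < n + 2) := ⟨by omega⟩
  have row_zero : ∑ g, (diffCount R (0, g) : ℤ) = 0 := by
    rw [sum_diffCount_row R 0 (a := 0) (by exact_mod_cast diffCount_zero R) hl2, mul_zero,
      add_zero]
  have row_pm_one : ∀ h : ZMod (n + 2), h = 1 ∨ h = -1 →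
      ∑ g, (diffCount R (h, g) : ℤ) = l3 + ((p : ℤ) - 1) * m2 := fun h hh =>
    sum_diffCount_row R h (hl3 h hh) (hm2 h · hh)
  have row_other : ∀ h ∉ ({0, 1, -1} : Finset (ZMod (n + 2))),
      ∑ g, (diffCount R (h, g) : ℤ) = l1 + ((p : ℤ) - 1) * m1 := fun h hh => by
    simp only [mem_insert, mem_singleton, not_or] at hh
    obtain ⟨h0, h1, hn1⟩ := hh
    exact sum_diffCount_row R h (hl1 h h0 h1 hn1) (hm1 h · h0 h1 hn1)
  calc _ = ∑ h, ∑ g, (diffCount R (h, g) : ℤ) := by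
        rw [Fintype.sum_eq_sum_add_mul_of_eq_on_compl _ _ _ row_other, ZMod.card,
          ZMod.card_zero_one_neg_one, ZMod.sum_zero_one_neg_one, row_zero,
          row_pm_one 1 (.inl rfl), row_pm_one (-1) (.inr rfl)]
        push_cast; ring
    _ = (n : ℤ) ^ 2 - n := by
        rw [← Fintype.sum_prod_type', sum_diffCount_eq_card_sq_sub_card, hcard]
end

section
/- Let p be a prime, n ≥ 2 an integer, and γ1, γ2 integers with p dividing n - γ2 - 2 and n - γ1 - 1. Let R ⊆ ZMod (n+2) × ZMod p be an (n+2, p, n, (n-γ2-2)/p + γ2, 0, (n-γ1-1)/p + γ1, (n-γ2-2)/p, (n-γ1-1)/p)-PDPDS, and for i = 0, 1, …, p-1 let s_i be the number of elements of R whose second component equals i. Then ∑_{j=0}^{p-1} s_j² = ((n-γ2-2)/p + γ2)·(n-1) + 2·((n-γ1-1)/p + γ1) + n, and for each i = 1, 2, …, ⌈(p-1)/2⌉, ∑_{j=0}^{p-1} s_j·s_{j-i} = ((n-γ2-2)/p)·(n-1) + 2·((n-γ1-1)/p), where the subscripts are computed modulo p. -/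
/-!
Sorting the ordered pairs `(r₁, r₂) ∈ R × R` by the difference of their second coordinates shows
that `∑ⱼ s_j s_{j-g}` counts the pairs with `r₁.2 - r₂.2 = g`. Sorting those further by the
first coordinate of `r₁ - r₂` turns the count into `∑_h D_R(h, g)`, plus `|R|` for the diagonal
pairs when `g = 0`. The PDPDS parameters give every term of this sum: `D_R(0, 0) = 0`, the two
terms `h = ±1`, and `n - 1` equal terms for the remaining `h`.
-/

open Finset

theorem sum_card_fiber_mul_card_fiber_sub_eq_card {α B : Type*} [DecidableEq α] [AddCommGroup B]
    [Fintype B] [DecidableEq B] (R : Finset α) (f : α → B) (g : B) :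
    ∑ b, #(R.filter (f · = b)) * #(R.filter (f · = b - g)) =
      #((R ×ˢ R).filter (fun x => f x.1 - f x.2 = g)) := by
  rw [card_eq_sum_card_fiberwise (f := fun x => f x.1) (t := univ) (fun _ _ => mem_univ _)]
  refine sum_congr rfl fun b _ => ?_
  rw [← card_product, filter_filter]
  congr 1
  ext ⟨x, y⟩
  simp only [mem_product, mem_filter]
  constructor
  · rintro ⟨⟨hx, rfl⟩, hy, hfy⟩
    exact ⟨⟨hx, hy⟩, by rw [hfy]; abel, rfl⟩
  · rintro ⟨⟨hx, hy⟩, rfl, rfl⟩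
    exact ⟨⟨hx, rfl⟩, hy, by abel⟩

theorem card_filter_snd_sub_eq_sum {A B : Type*} [AddCommGroup A] [AddCommGroup B] [Fintype A]
    [DecidableEq A] [DecidableEq B] (R : Finset (A × B)) (g : B) :
    #((R ×ˢ R).filter (fun x => x.1.2 - x.2.2 = g)) =
      ∑ h, #((R ×ˢ R).filter (fun x => x.1 - x.2 = (h, g))) := by
  rw [card_eq_sum_card_fiberwise (f := fun x => x.1.1 - x.2.1) (t := univ)
    (fun _ _ => mem_univ _)]
  refine sum_congr rfl fun h _ => ?_
  rw [filter_filter]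
  simp only [Prod.ext_iff, Prod.fst_sub, Prod.snd_sub, and_comm]

theorem card_filter_sub_eq_diffCount {N m : ℕ} (R : Finset (ZMod N × ZMod m))
    (d : ZMod N × ZMod m) :
    #((R ×ˢ R).filter (fun x => x.1 - x.2 = d)) = diffCount R d + if d = 0 then #R else 0 := by
  rw [← card_filter_add_card_filter_not (p := fun x => x.1 ≠ x.2), filter_filter, diffCount,
    filter_filter]
  congr 1
  · simp only [and_comm]
  · split_ifs with hd
    · rw [← diag_card R, diag_eq_filter]
      congr 1
      ext x
      simp only [mem_filter, not_not, hd, sub_eq_zero, and_self]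
    · rw [card_eq_zero, filter_eq_empty_iff]
      rintro x - ⟨rfl, hx⟩
      exact hd (by rw [not_not.mp hx, sub_self])

theorem diffCount_zero_s10 {N m : ℕ} (R : Finset (ZMod N × ZMod m)) : diffCount R 0 = 0 := by
  rw [diffCount, card_eq_zero, filter_eq_empty_iff]
  rintro x - ⟨hne, heq⟩
  exact hne (sub_eq_zero.mp heq)

theorem ZMod.sum_eq_of_eq_off_zero_one_neg_one {N : ℕ} [NeZero N] (hN : 3 ≤ N) (F : ZMod N → ℤ)
    (c : ℤ) (hF : ∀ h, h ≠ 0 → h ≠ 1 → h ≠ -1 → F h = c) :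
    ∑ h, F h = F 0 + F 1 + F (-1) + (N - 3) * c := by
  have : Fact (1 < N) := ⟨by omega⟩
  have : Fact (2 < N) := ⟨hN⟩
  have h01 : (0 : ZMod N) ≠ 1 := zero_ne_one
  have h0m1 : (0 : ZMod N) ≠ -1 := (neg_ne_zero.mpr one_ne_zero).symm
  have h1m1 : (1 : ZMod N) ≠ -1 := ZMod.neg_one_ne_one.symm
  have hT : #({0, 1, -1} : Finset (ZMod N)) = 3 := by
    rw [card_insert_of_notMem (by simp [h01, h0m1]), card_pair h1m1]
  rw [← sum_add_sum_compl {0, 1, -1}, sum_insert (by simp [h01, h0m1]), sum_pair h1m1,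
    sum_congr rfl (g := fun _ => c) (by simp +contextual [hF]), sum_const, card_compl, hT,
    ZMod.card, nsmul_eq_mul, Nat.cast_sub hN]
  push_cast
  ring

theorem ZMod.sum_range_natCast {p : ℕ} [NeZero p] {M : Type*} [AddCommMonoid M]
    (f : ZMod p → M) : ∑ j ∈ range p, f j = ∑ j, f j :=
  sum_nbij' (fun j => j) ZMod.val (fun _ _ => mem_univ _)
    (fun c _ => mem_range.mpr (ZMod.val_lt c)) (fun _ hj => ZMod.val_cast_of_lt (mem_range.mp hj))
    (fun c _ => ZMod.natCast_zmod_val c) (fun _ _ => rfl)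

theorem sum_card_fiber_mul_card_fiber_sub_eq_sum_diffCount {N m : ℕ} [NeZero N] [NeZero m]
    (R : Finset (ZMod N × ZMod m)) (g : ZMod m) :
    ∑ j, (#(R.filter (·.2 = j)) * #(R.filter (·.2 = j - g)) : ℤ) =
      ∑ h, (diffCount R (h, g) : ℤ) + if g = 0 then (#R : ℤ) else 0 := by
  have hcount := sum_card_fiber_mul_card_fiber_sub_eq_card R Prod.snd g
  rw [card_filter_snd_sub_eq_sum] at hcount
  simp only [card_filter_sub_eq_diffCount, Prod.mk_eq_zero, sum_add_distrib, ite_and,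
    Fintype.sum_ite_eq'] at hcount
  exact_mod_cast hcount

namespace IsPDPDS

variable {N p k : ℕ} [NeZero N] [NeZero p] {l1 l2 l3 m1 m2 : ℤ} {R : Finset (ZMod N × ZMod p)}

theorem sum_card_fiber_sq (hN : 3 ≤ N) (hR : IsPDPDS N p k l1 l2 l3 m1 m2 R) :
    ∑ j, (#(R.filter (·.2 = j)) : ℤ) ^ 2 = (N - 3) * l1 + 2 * l3 + k := by
  obtain ⟨hcard, hl1, -, hl3, -, -⟩ := hR
  have h := sum_card_fiber_mul_card_fiber_sub_eq_sum_diffCount R 0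
  simp only [sub_zero, ← sq, if_pos, hcard] at h
  rw [h, ZMod.sum_eq_of_eq_off_zero_one_neg_one hN _ _ hl1, Prod.mk_zero_zero, diffCount_zero_s10,
    hl3 1 (.inl rfl), hl3 (-1) (.inr rfl)]
  push_cast
  ring

theorem sum_card_fiber_mul_card_fiber_sub (hN : 3 ≤ N) (hR : IsPDPDS N p k l1 l2 l3 m1 m2 R)
    {g : ZMod p} (hg : g ≠ 0) :
    ∑ j, (#(R.filter (·.2 = j)) * #(R.filter (·.2 = j - g)) : ℤ) = (N - 3) * m1 + 2 * m2 + l2 := by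
  obtain ⟨-, -, hl2, -, hm1, hm2⟩ := hR
  rw [sum_card_fiber_mul_card_fiber_sub_eq_sum_diffCount, if_neg hg, add_zero,
    ZMod.sum_eq_of_eq_off_zero_one_neg_one hN _ _ fun h h0 h1 hm => hm1 h g h0 h1 hm hg,
    hl2 g hg, hm2 1 g (.inl rfl) hg, hm2 (-1) g (.inr rfl) hg]
  ring

end IsPDPDS

theorem stmt10_general (p n : ℕ) (hp : p.Prime) (hn : 2 ≤ n) (γ1 γ2 : ℤ)
    (R : Finset (ZMod (n + 2) × ZMod p))
    (hPDPDS : IsPDPDS (n + 2) p n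
      (((n : ℤ) - γ2 - 2) / p + γ2) 0 (((n : ℤ) - γ1 - 1) / p + γ1)
      (((n : ℤ) - γ2 - 2) / p) (((n : ℤ) - γ1 - 1) / p) R)
    (s : ZMod p → ℕ)
    (hs : ∀ c : ZMod p, s c = (R.filter (fun x => x.2 = c)).card) :
    (∑ j ∈ Finset.range p, (s (j : ZMod p) : ℤ) ^ 2 =
      (((n : ℤ) - γ2 - 2) / p + γ2) * ((n : ℤ) - 1) +
        2 * (((n : ℤ) - γ1 - 1) / p + γ1) + n) ∧
    (∀ i : ℕ, 1 ≤ i → i ≤ p / 2 →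
      ∑ j ∈ Finset.range p, (s (j : ZMod p) : ℤ) * (s ((j : ZMod p) - (i : ZMod p)) : ℤ) =
        (((n : ℤ) - γ2 - 2) / p) * ((n : ℤ) - 1) + 2 * (((n : ℤ) - γ1 - 1) / p)) := by
  have : NeZero p := ⟨hp.ne_zero⟩
  have hN : 3 ≤ n + 2 := by omega
  have hn1 : ((n + 2 : ℕ) : ℤ) - 3 = n - 1 := by push_cast; ring
  refine ⟨?_, fun i hi hip => ?_⟩
  · rw [ZMod.sum_range_natCast fun j => (s j : ℤ) ^ 2]
    simp only [hs]
    rw [hPDPDS.sum_card_fiber_sq hN, hn1]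
    ring
  · have hi0 : (i : ZMod p) ≠ 0 := by
      rw [Ne, ZMod.natCast_eq_zero_iff]
      exact Nat.not_dvd_of_pos_of_lt hi (by omega)
    rw [ZMod.sum_range_natCast fun j => (s j * s (j - i) : ℤ)]
    simp only [hs]
    rw [hPDPDS.sum_card_fiber_mul_card_fiber_sub hN hi0, hn1]
    ring

/-- Note: in ℕ, `⌈(p-1)/2⌉ = p / 2` for `p ≥ 1`. -/
theorem stmt10 (p n : ℕ) (hp : p.Prime) (hn : 2 ≤ n) (γ1 γ2 : ℤ)
    (hdvd2 : (p : ℤ) ∣ (n : ℤ) - γ2 - 2) (hdvd1 : (p : ℤ) ∣ (n : ℤ) - γ1 - 1)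
    (R : Finset (ZMod (n + 2) × ZMod p))
    (hPDPDS : IsPDPDS (n + 2) p n
      (((n : ℤ) - γ2 - 2) / p + γ2) 0 (((n : ℤ) - γ1 - 1) / p + γ1)
      (((n : ℤ) - γ2 - 2) / p) (((n : ℤ) - γ1 - 1) / p) R)
    (s : ZMod p → ℕ)
    (hs : ∀ c : ZMod p, s c = (R.filter (fun x => x.2 = c)).card) :
    (∑ j ∈ Finset.range p, (s (j : ZMod p) : ℤ) ^ 2 =
      (((n : ℤ) - γ2 - 2) / p + γ2) * ((n : ℤ) - 1) +
        2 * (((n : ℤ) - γ1 - 1) / p + γ1) + n) ∧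
    (∀ i : ℕ, 1 ≤ i → i ≤ p / 2 →
      ∑ j ∈ Finset.range p, (s (j : ZMod p) : ℤ) * (s ((j : ZMod p) - (i : ZMod p)) : ℤ) =
        (((n : ℤ) - γ2 - 2) / p) * ((n : ℤ) - 1) + 2 * (((n : ℤ) - γ1 - 1) / p)) :=
  stmt10_general p n hp hn γ1 γ2 R hPDPDS s hs
end

section
/- Let p be a prime, n ≥ 2 an integer, and γ1, γ2 integers with p dividing n - γ2 - 2 and n - γ1 - 1. Let R ⊆ ZMod (n+2) × ZMod p be an (n+2, p, n, (n-γ2-2)/p + γ2, 0, (n-γ1-1)/p + γ1, (n-γ2-2)/p, (n-γ1-1)/p)-PDPDS, and for i = 0, 1, …, p-1 let s_i be the number of elements of R whose second component equals i. Then for each i = 1, 2, …, ⌈(p-1)/2⌉, (p-1)·(∑_{j=0}^{p-1} s_j·s_{j-i}) + ∑_{j=0}^{p-1} s_j² = n², where the subscripts are computed modulo p. -/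
open Finset

/-!
The numbers `s c` are the fibre sizes of the projection `R → ZMod p`, so
`∑_c s_c s_{c-g}` counts the pairs of `R × R` whose second coordinates differ by `g`.
Summed over all `g` this is `|R|² = n²`, and the term `g = 0` is `∑_c s_c²`. For `g ≠ 0`
the count is `∑_h D_R(h, g)`, which the PDPDS conditions make independent of `g`;
hence the `p - 1` terms with `g ≠ 0` are all equal to the one at `g = i`.
-/

lemma sum_range_natCast_eq_sum_zmod {M : Type*} [AddCommMonoid M] (p : ℕ) [NeZero p]
    (f : ZMod p → M) : ∑ j ∈ range p, f (j : ZMod p) = ∑ c : ZMod p, f c :=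
  sum_nbij' (fun j => (j : ZMod p)) ZMod.val (fun _ _ => mem_univ _)
    (fun c _ => mem_range.2 c.val_lt) (fun _ ha => ZMod.val_cast_of_lt (mem_range.1 ha))
    (fun c _ => ZMod.natCast_zmod_val c) (fun _ _ => rfl)

section ProjDiffCount

variable {α H : Type*} [AddCommGroup H] [Fintype H] [DecidableEq H]

def projDiffCount (f : α → H) (R : Finset α) (g : H) : ℕ :=
  ((R ×ˢ R).filter (fun x => f x.1 - f x.2 = g)).card

lemma projDiffCount_eq_sum_mul (f : α → H) (R : Finset α) (g : H) :
    projDiffCount f R g =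
      ∑ c, (R.filter (f · = c)).card * (R.filter (f · = c - g)).card := by
  rw [projDiffCount, card_eq_sum_card_fiberwise (f := fun x => f x.1) (t := univ)
    (fun _ _ => mem_univ _)]
  refine sum_congr rfl fun c _ => ?_
  rw [filter_filter, ← card_product, ← filter_product]
  congr 1
  refine filter_congr fun x _ => ?_
  constructor
  · rintro ⟨hsub, rfl⟩
    exact ⟨rfl, by rw [← hsub, sub_sub_cancel]⟩
  · rintro ⟨rfl, hx⟩
    exact ⟨by rw [hx, sub_sub_cancel], rfl⟩

lemma sum_projDiffCount (f : α → H) (R : Finset α) :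
    ∑ g, projDiffCount f R g = R.card ^ 2 := by
  rw [sq, ← card_product, card_eq_sum_card_fiberwise (f := fun x => f x.1 - f x.2) (t := univ)
    (fun _ _ => mem_univ _)]
  rfl

end ProjDiffCount

section PDPDS

variable {N m : ℕ} [NeZero N]

lemma sum_diffCount_eq_projDiffCount (R : Finset (ZMod N × ZMod m)) {g : ZMod m}
    (hg : g ≠ 0) : ∑ h : ZMod N, diffCount R (h, g) = projDiffCount Prod.snd R g := by
  rw [projDiffCount, card_eq_sum_card_fiberwise (f := fun x => x.1.1 - x.2.1) (t := univ)
    (fun _ _ => mem_univ _)]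
  refine sum_congr rfl fun h _ => ?_
  rw [diffCount, filter_filter]
  congr 1
  refine filter_congr fun x _ => ?_
  rw [Prod.ext_iff, Prod.fst_sub, Prod.snd_sub]
  constructor
  · rintro ⟨-, h1, h2⟩
    exact ⟨h2, h1⟩
  · rintro ⟨h2, h1⟩
    refine ⟨fun hx => hg ?_, h1, h2⟩
    rw [← h2, hx, sub_self]

/-- For `g ≠ 0`, `D_R(h, g)` is `λ2`, `μ2` or `μ1` according to `h` alone. -/
lemma IsPDPDS.sum_diffCount_eq {p k : ℕ} {l1 l2 l3 m1 m2 : ℤ} {R : Finset (ZMod N × ZMod p)}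
    (hR : IsPDPDS N p k l1 l2 l3 m1 m2 R) {g g' : ZMod p} (hg : g ≠ 0) (hg' : g' ≠ 0) :
    ∑ h : ZMod N, diffCount R (h, g) = ∑ h : ZMod N, diffCount R (h, g') := by
  obtain ⟨-, -, hl2, -, hm1, hm2⟩ := hR
  refine sum_congr rfl fun h _ => ?_
  zify
  by_cases h0 : h = 0
  · rw [h0, hl2 g hg, hl2 g' hg']
  by_cases h1 : h = 1 ∨ h = -1
  · rw [hm2 h g h1 hg, hm2 h g' h1 hg']
  · obtain ⟨hne1, hne1'⟩ := not_or.1 h1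
    rw [hm1 h g h0 hne1 hne1' hg, hm1 h g' h0 hne1 hne1' hg']

lemma IsPDPDS.sub_one_mul_projDiffCount_add_projDiffCount_zero {p k : ℕ} [NeZero p] {l1 l2 l3 m1 m2 : ℤ}
    {R : Finset (ZMod N × ZMod p)} (hR : IsPDPDS N p k l1 l2 l3 m1 m2 R) {g : ZMod p}
    (hg : g ≠ 0) :
    (p - 1) * projDiffCount Prod.snd R g + projDiffCount Prod.snd R 0 = k ^ 2 := by
  have hconst : ∀ g' ∈ univ.erase (0 : ZMod p),
      projDiffCount Prod.snd R g' = projDiffCount Prod.snd R g := fun g' hg' => by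
    have hg'0 := ne_of_mem_erase hg'
    rw [← sum_diffCount_eq_projDiffCount R hg'0, ← sum_diffCount_eq_projDiffCount R hg,
      hR.sum_diffCount_eq hg'0 hg]
  rw [← hR.1, ← sum_projDiffCount Prod.snd R, ← sum_erase_add _ _ (mem_univ 0),
    sum_congr rfl hconst, sum_const, card_erase_of_mem (mem_univ _), card_univ, ZMod.card,
    smul_eq_mul]

end PDPDS

/-- `⌈(p-1)/2⌉` is written `p / 2`, which agrees with it in `ℕ` for `p ≥ 1`. -/
theorem stmt11_general (p n : ℕ) (γ1 γ2 : ℤ)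
    (R : Finset (ZMod (n + 2) × ZMod p))
    (hPDPDS : IsPDPDS (n + 2) p n
      (((n : ℤ) - γ2 - 2) / p + γ2) 0 (((n : ℤ) - γ1 - 1) / p + γ1)
      (((n : ℤ) - γ2 - 2) / p) (((n : ℤ) - γ1 - 1) / p) R)
    (s : ZMod p → ℕ)
    (hs : ∀ c : ZMod p, s c = (R.filter (fun x => x.2 = c)).card) :
    ∀ i : ℕ, 1 ≤ i → i ≤ p / 2 →
      ((p : ℤ) - 1) *
          (∑ j ∈ Finset.range p, (s (j : ZMod p) : ℤ) * (s ((j : ZMod p) - (i : ZMod p)) : ℤ)) +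
        ∑ j ∈ Finset.range p, (s (j : ZMod p) : ℤ) ^ 2 = (n : ℤ) ^ 2 := by
  intro i hi1 hi2
  have hip : i < p := by omega
  have : NeZero p := ⟨by omega⟩
  have hi0 : (i : ZMod p) ≠ 0 :=
    (ZMod.natCast_eq_zero_iff i p).not.2 (Nat.not_dvd_of_pos_of_lt hi1 hip)
  have key := hPDPDS.sub_one_mul_projDiffCount_add_projDiffCount_zero hi0
  simp only [projDiffCount_eq_sum_mul, sub_zero, ← sq, ← hs] at key
  rw [sum_range_natCast_eq_sum_zmod p (fun c => (s c : ℤ) * s (c - i)),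
    sum_range_natCast_eq_sum_zmod p (fun c => (s c : ℤ) ^ 2), ← Nat.cast_pred (by omega)]
  exact_mod_cast key

/-- Note: in ℕ, `⌈(p-1)/2⌉ = p / 2` for `p ≥ 1`. -/
theorem stmt11 (p n : ℕ) (hp : p.Prime) (hn : 2 ≤ n) (γ1 γ2 : ℤ)
    (hdvd2 : (p : ℤ) ∣ (n : ℤ) - γ2 - 2) (hdvd1 : (p : ℤ) ∣ (n : ℤ) - γ1 - 1)
    (R : Finset (ZMod (n + 2) × ZMod p))
    (hPDPDS : IsPDPDS (n + 2) p n
      (((n : ℤ) - γ2 - 2) / p + γ2) 0 (((n : ℤ) - γ1 - 1) / p + γ1)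
      (((n : ℤ) - γ2 - 2) / p) (((n : ℤ) - γ1 - 1) / p) R)
    (s : ZMod p → ℕ)
    (hs : ∀ c : ZMod p, s c = (R.filter (fun x => x.2 = c)).card) :
    ∀ i : ℕ, 1 ≤ i → i ≤ p / 2 →
      ((p : ℤ) - 1) *
          (∑ j ∈ Finset.range p, (s (j : ZMod p) : ℤ) * (s ((j : ZMod p) - (i : ZMod p)) : ℤ)) +
        ∑ j ∈ Finset.range p, (s (j : ZMod p) : ℤ) ^ 2 = (n : ℤ) ^ 2 :=
  stmt11_general p n γ1 γ2 R hPDPDS s hs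
end

section
/- Let p be an odd prime, n ≥ 2 an integer, and γ1, γ2 integers with γ2 ≤ -3. Then there does not exist an almost p-ary nearly perfect sequence of type (γ1, γ2) and period n+2 with two consecutive zero-symbols. -/
/-!
Summing the autocorrelation over a full period gives
`‖∑ aᵢ‖² = C(0) + 2γ₁ + (n - 1)γ₂ = n + 2γ₁ + (n - 1)γ₂`.
Since `a₀ = a₁ = 0`, `C(1) = ∑_{i=2}^{n} aᵢ · conj aᵢ₊₁` is a sum of `n - 1` unimodular terms, so
`γ₁ ≤ n - 1`, with equality only if `a₂ = ⋯ = aₙ₊₁`. On the other hand `‖∑ aᵢ‖² ≥ 0` and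
`γ₂ ≤ -3` give `2γ₁ ≥ 2n - 3`, hence `γ₁ = n - 1` by integrality. So all nonzero symbols agree,
`‖∑ aᵢ‖² = n²`, and `n² = 3n - 2 + (n - 1)γ₂ ≤ 1` contradicts `n ≥ 2`.
-/

open Finset

open ComplexConjugate

theorem Function.Periodic.sum_range_nat_add {M : Type*} [AddCommMonoid M] {N : ℕ} {f : ℤ → M}
    (hf : Function.Periodic f N) (i : ℕ) :
    ∑ t ∈ range N, f (i + t) = ∑ t ∈ range N, f t := by
  induction i with
  | zero => simp
  | succ i ih =>
    rw [← ih]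
    rcases N with _ | N
    · simp
    rw [sum_range_succ, sum_range_succ']
    congr 1
    · refine sum_congr rfl fun t _ => ?_
      push_cast
      ring_nf
    · rw [Nat.cast_zero, add_zero, ← hf i]
      push_cast
      ring_nf

theorem sum_autocorr_range {N : ℕ} {a : ℤ → ℂ} (ha : Function.Periodic a N) :
    ∑ t ∈ range N, autocorr N a t = ‖∑ i ∈ range N, a i‖ ^ 2 := by
  rw [← Complex.mul_conj', sum_mul]
  unfold autocorr
  rw [sum_comm]
  refine sum_congr rfl fun i _ => ?_
  rw [← mul_sum, ← map_sum, ha.sum_range_nat_add]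

theorem autocorr_zero (N : ℕ) (a : ℤ → ℂ) : autocorr N a 0 = ∑ i ∈ range N, (‖a i‖ ^ 2 : ℂ) := by
  simp [autocorr, Complex.mul_conj']

theorem Complex.re_mul_conj_of_norm_eq_one {z w : ℂ} (hz : ‖z‖ = 1) (hw : ‖w‖ = 1) :
    (z * conj w).re = 1 - ‖z - w‖ ^ 2 / 2 := by
  rw [← Complex.normSq_eq_norm_sq, Complex.normSq_sub, Complex.normSq_eq_norm_sq,
    Complex.normSq_eq_norm_sq, hz, hw]
  ring

theorem sum_range_add_two_eq_sum_Ico {M : Type*} [AddCommMonoid M] {f : ℕ → M} (n : ℕ)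
    (h0 : f 0 = 0) (h1 : f 1 = 0) : ∑ i ∈ range (n + 2), f i = ∑ i ∈ Ico 2 (n + 2), f i := by
  rw [← sum_range_add_sum_Ico f (by omega : 2 ≤ n + 2)]
  simp [sum_range_succ, h0, h1]

section UnimodularAfterTwoZeros

variable {n : ℕ} {a : ℤ → ℂ}

theorem autocorr_zero_eq_of_unimodular (h0 : a 0 = 0) (h1 : a 1 = 0)
    (hunit : ∀ i : ℕ, 2 ≤ i → i ≤ n + 1 → ‖a i‖ = 1) : autocorr (n + 2) a 0 = n := by
  rw [autocorr_zero, sum_range_add_two_eq_sum_Ico n (by simp [h0]) (by simp [h1]),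
    sum_congr rfl fun i hi => by rw [hunit i (mem_Ico.1 hi).1 (by grind)]]
  simp

theorem autocorr_one_eq_sum_Ico (hper : Function.Periodic a (n + 2 : ℕ)) (h0 : a 0 = 0)
    (h1 : a 1 = 0) (hn : 1 ≤ n) :
    autocorr (n + 2) a 1 = ∑ i ∈ Ico 2 (n + 1), a i * conj (a (i + 1)) := by
  have hlast : a ((n + 1 : ℕ) + 1) = 0 := by
    rw [← h0, ← hper 0]
    push_cast
    ring_nf
  rw [autocorr, sum_range_add_two_eq_sum_Ico n (by simp [h0]) (by simp [h1]),
    sum_Ico_succ_top (by omega), hlast, map_zero, mul_zero, add_zero]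

theorem re_autocorr_one_eq (hper : Function.Periodic a (n + 2 : ℕ)) (h0 : a 0 = 0)
    (h1 : a 1 = 0) (hunit : ∀ i : ℕ, 2 ≤ i → i ≤ n + 1 → ‖a i‖ = 1) (hn : 1 ≤ n) :
    (autocorr (n + 2) a 1).re = n - 1 - (∑ i ∈ Ico 2 (n + 1), ‖a i - a (i + 1)‖ ^ 2) / 2 := by
  rw [autocorr_one_eq_sum_Ico hper h0 h1 hn, Complex.re_sum,
    sum_congr rfl fun i hi => Complex.re_mul_conj_of_norm_eq_one
      (hunit i (mem_Ico.1 hi).1 (by grind)) (by exact_mod_cast hunit (i + 1) (by grind) (by grind))]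
  simp [sum_sub_distrib, ← sum_div, Nat.cast_sub hn]

theorem re_autocorr_one_le (hper : Function.Periodic a (n + 2 : ℕ)) (h0 : a 0 = 0)
    (h1 : a 1 = 0) (hunit : ∀ i : ℕ, 2 ≤ i → i ≤ n + 1 → ‖a i‖ = 1) (hn : 1 ≤ n) :
    (autocorr (n + 2) a 1).re ≤ n - 1 := by
  rw [re_autocorr_one_eq hper h0 h1 hunit hn, sub_le_self_iff]
  positivity

theorem apply_eq_apply_two_of_le_re_autocorr_one (hper : Function.Periodic a (n + 2 : ℕ))
    (h0 : a 0 = 0) (h1 : a 1 = 0) (hunit : ∀ i : ℕ, 2 ≤ i → i ≤ n + 1 → ‖a i‖ = 1) (hn : 1 ≤ n)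
    (hre : (n : ℝ) - 1 ≤ (autocorr (n + 2) a 1).re) :
    ∀ i : ℕ, 2 ≤ i → i ≤ n + 1 → a i = a 2 := by
  have hsum : ∑ i ∈ Ico 2 (n + 1), ‖a i - a (i + 1)‖ ^ 2 = 0 := by
    rw [re_autocorr_one_eq hper h0 h1 hunit hn] at hre
    exact le_antisymm (by linarith) (by positivity)
  have hstep : ∀ i ∈ Ico 2 (n + 1), a (i + 1 : ℕ) = a i := fun i hi => by
    have := (sum_eq_zero_iff_of_nonneg fun i _ => by positivity).1 hsum i hi
    rw [sq_eq_zero_iff, norm_eq_zero, sub_eq_zero] at this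
    push_cast
    exact this.symm
  intro i hi2 hi
  induction i, hi2 using Nat.le_induction with
  | base => rfl
  | succ i hi2 ih => rw [hstep i (mem_Ico.2 ⟨hi2, by omega⟩), ih (by omega)]

theorem norm_sum_sq_of_apply_eq_apply_two (h0 : a 0 = 0) (h1 : a 1 = 0) (h2 : ‖a 2‖ = 1)
    (heq : ∀ i : ℕ, 2 ≤ i → i ≤ n + 1 → a i = a 2) :
    ‖∑ i ∈ range (n + 2), a i‖ ^ 2 = (n : ℝ) ^ 2 := by
  rw [sum_range_add_two_eq_sum_Ico n (by simp [h0]) (by simp [h1]),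
    sum_congr rfl fun i hi => heq i (mem_Ico.1 hi).1 (by grind)]
  simp [h2]

theorem norm_sum_sq_eq_of_autocorr (hper : Function.Periodic a (n + 2 : ℕ)) (h0 : a 0 = 0)
    (h1 : a 1 = 0) (hunit : ∀ i : ℕ, 2 ≤ i → i ≤ n + 1 → ‖a i‖ = 1) (hn : 1 ≤ n)
    {γ1 γ2 : ℤ} (hc1 : autocorr (n + 2) a 1 = γ1) (hcn1 : autocorr (n + 2) a (n + 1) = γ1)
    (hmid : ∀ t : ℕ, 2 ≤ t → t ≤ n → autocorr (n + 2) a t = γ2) :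
    ‖∑ i ∈ range (n + 2), a i‖ ^ 2 = (n + 2 * γ1 + (n - 1) * γ2 : ℝ) := by
  have hsplit : ∑ t ∈ range (n + 2), autocorr (n + 2) a t =
      autocorr (n + 2) a 0 + autocorr (n + 2) a 1 +
        ∑ t ∈ Ico 2 (n + 1), autocorr (n + 2) a t + autocorr (n + 2) a (n + 1 : ℕ) := by
    rw [← sum_range_add_sum_Ico _ (by omega : 2 ≤ n + 2), sum_Ico_succ_top (by omega)]
    simp [sum_range_succ, add_assoc]
  rw [sum_autocorr_range hper, autocorr_zero_eq_of_unimodular h0 h1 hunit, hc1,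
    sum_congr rfl fun t ht => hmid t (mem_Ico.1 ht).1 (by grind), Nat.cast_add_one, hcn1,
    sum_const, Nat.card_Ico, nsmul_eq_mul] at hsplit
  apply Complex.ofReal_injective
  push_cast [Nat.cast_sub hn] at hsplit ⊢
  linear_combination hsplit

end UnimodularAfterTwoZeros

theorem stmt13_general (p n : ℕ) (hp : p.Prime) (hn : 2 ≤ n)
    (ζ : ℂ) (hζ : IsPrimitiveRoot ζ p)
    (γ1 γ2 : ℤ) (hγ2 : γ2 ≤ -3) :
    ¬ ∃ a : ℤ → ℂ,
      (∀ i : ℤ, a (i + (n + 2 : ℕ)) = a i) ∧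
      a 0 = 0 ∧ a 1 = 0 ∧
      (∀ i : ℕ, 2 ≤ i → i ≤ n + 1 → ∃ b : ℕ, a (i : ℤ) = ζ ^ b) ∧
      autocorr (n + 2) a 1 = (γ1 : ℂ) ∧ autocorr (n + 2) a ((n : ℤ) + 1) = (γ1 : ℂ) ∧
      (∀ t : ℕ, 2 ≤ t → t ≤ n → autocorr (n + 2) a (t : ℤ) = (γ2 : ℂ)) := by
  rintro ⟨a, hper, h0, h1, hval, hc1, hcn1, hmid⟩
  have hunit : ∀ i : ℕ, 2 ≤ i → i ≤ n + 1 → ‖a i‖ = 1 := fun i hi2 hi => by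
    obtain ⟨b, hb⟩ := hval i hi2 hi
    rw [hb, norm_pow, hζ.norm'_eq_one hp.ne_zero, one_pow]
  have hS := norm_sum_sq_eq_of_autocorr hper h0 h1 hunit (by omega) hc1 hcn1 hmid
  have hre : (autocorr (n + 2) a 1).re = γ1 := by simp [hc1]
  have hγ1_le : (γ1 : ℝ) ≤ n - 1 := hre ▸ re_autocorr_one_le hper h0 h1 hunit (by omega)
  have hγ1_ge : (n : ℝ) - 1 ≤ γ1 := by
    have hK : (0 : ℤ) ≤ n + 2 * γ1 + (n - 1) * γ2 := by exact_mod_cast hS ▸ sq_nonneg _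
    have : (n : ℤ) - 1 ≤ γ1 := by nlinarith
    exact_mod_cast this
  have hconst :=
    apply_eq_apply_two_of_le_re_autocorr_one hper h0 h1 hunit (by omega) (hre ▸ hγ1_ge)
  rw [norm_sum_sq_of_apply_eq_apply_two h0 h1 (hunit 2 le_rfl (by omega)) hconst] at hS
  have hn' : (2 : ℝ) ≤ n := by exact_mod_cast hn
  have hγ2' : (γ2 : ℝ) ≤ -3 := by exact_mod_cast hγ2
  nlinarith [mul_le_mul_of_nonneg_left hγ2' (by linarith : (0 : ℝ) ≤ n - 1)]

theorem stmt13 (p n : ℕ) (hp : p.Prime) (hodd : Odd p) (hn : 2 ≤ n)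
    (ζ : ℂ) (hζ : IsPrimitiveRoot ζ p)
    (γ1 γ2 : ℤ) (hγ2 : γ2 ≤ -3) :
    ¬ ∃ a : ℤ → ℂ,
      (∀ i : ℤ, a (i + (n + 2 : ℕ)) = a i) ∧
      a 0 = 0 ∧ a 1 = 0 ∧
      (∀ i : ℕ, 2 ≤ i → i ≤ n + 1 → ∃ b : ℕ, a (i : ℤ) = ζ ^ b) ∧
      autocorr (n + 2) a 1 = (γ1 : ℂ) ∧ autocorr (n + 2) a ((n : ℤ) + 1) = (γ1 : ℂ) ∧
      (∀ t : ℕ, 2 ≤ t → t ≤ n → autocorr (n + 2) a (t : ℤ) = (γ2 : ℂ)) :=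
  stmt13_general p n hp hn ζ hζ γ1 γ2 hγ2
end
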